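/- arXiv:1808.02174 — 5 statements merged into one kernel-verified Lean document; each statement's English description precedes it below -/
import Mathlib

section
/- Let ε > 0, k ∈ ℕ, and p a probability distribution on [k]. Let α_R = (e^{ε/2}−1)/(e^{ε/2}+1), β_R = 1/(e^{ε/2}+1), λ = α_R/k + β_R, and u the uniform distribution on [k]. Let b_1,…,b_n ∈ {0,1}^k be the outputs of k-RAPPOR applied to n i.i.d. samples from p, N_x = Σ_{i=1}^n 1{b_{i,x} = 1}, and T = Σ_{x∈[k]} [(N_x − (n−1)λ)² − N_x] + k(n−1)λ². Then Var(T) ≤ 4 k n² + 8 n³ α_R² ‖p − u‖₂², which equals 4 k n² + 8 n·E[T]. -/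
open Finset

noncomputable def alphaR (ε : ℝ) : ℝ := (Real.exp (ε / 2) - 1) / (Real.exp (ε / 2) + 1)

noncomputable def betaR (ε : ℝ) : ℝ := 1 / (Real.exp (ε / 2) + 1)

/-- Probability that a single output of `k`-RAPPOR with privacy parameter `ε`,
applied to a sample drawn from `p`, equals the bit-vector `b`. -/
noncomputable def rapporOne (ε : ℝ) {k : ℕ} (p : Fin k → ℝ) (b : Fin k → Bool) : ℝ :=
  ∑ x : Fin k, p x *
    ∏ j : Fin k,
      (if b j
        then (if j = x then Real.exp (ε / 2) / (Real.exp (ε / 2) + 1)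
              else 1 / (Real.exp (ε / 2) + 1))
        else (if j = x then 1 / (Real.exp (ε / 2) + 1)
              else Real.exp (ε / 2) / (Real.exp (ε / 2) + 1)))

/-- Probability of a tuple of `n` i.i.d. RAPPOR outputs `B = (b_1, …, b_n)`. -/
noncomputable def rapporN (ε : ℝ) {k n : ℕ} (p : Fin k → ℝ) (B : Fin n → Fin k → Bool) : ℝ :=
  ∏ i : Fin n, rapporOne ε p (B i)

/-- `N_x = Σ_i 1{b_{i,x} = 1}`. -/
noncomputable def Ncount {k n : ℕ} (B : Fin n → Fin k → Bool) (x : Fin k) : ℝ :=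
  ∑ i : Fin n, (if B i x then (1 : ℝ) else 0)

/-- The statistic `T = Σ_x [(N_x − (n−1)λ)² − N_x] + k(n−1)λ²`,
where `λ = α_R/k + β_R`. -/
noncomputable def Tstat (ε : ℝ) {k n : ℕ} (B : Fin n → Fin k → Bool) : ℝ :=
  (∑ x : Fin k,
      ((Ncount B x - ((n : ℝ) - 1) * (alphaR ε / k + betaR ε)) ^ 2 - Ncount B x))
    + (k : ℝ) * ((n : ℝ) - 1) * (alphaR ε / k + betaR ε) ^ 2

/-!
With `Z_x(b) = 1{b_x = 1}` and `λ = α_R/k + β_R`, idempotence of bits turns `T` into the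
U-statistic `∑_{i ≠ j} H(b_i, b_j)` of the inner-product kernel
`H(b, b') = ∑_x (Z_x(b) - λ)(Z_x(b') - λ)`. Writing `q = α_R p + β_R` for the mean of `Z` and
`δ = q - λ = α_R (p - u)`, the Hoeffding decomposition of `H` has mean `‖δ‖²`, linear part
`⟨δ, Z(b) - q⟩` and degenerate part `⟨Z(b) - q, Z(b') - q⟩`. Products of these terms over
distinct samples average to zero unless every sample index occurs twice, so
`E T = n(n-1)‖δ‖²` and `Var T = 4n(n-1)² δᵀCδ + 2n(n-1)‖C‖_F²`, where `C` is the covariance of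
one output: `C_xx = q_x(1 - q_x)` and `C_xy = -α_R² p_x p_y` for `x ≠ y`. Finally
`δᵀCδ ≤ 2‖δ‖²` and `‖C‖_F² ≤ 2k`.
-/

section ProductWeights

variable {Ω ι : Type*} [Fintype Ω] [Fintype ι] [DecidableEq ι] (μ : Ω → ℝ)

noncomputable def piExpect (F : (ι → Ω) → ℝ) : ℝ := ∑ B, (∏ i, μ (B i)) * F B

variable {μ}

lemma piExpect_add (F G : (ι → Ω) → ℝ) :
    piExpect μ (fun B => F B + G B) = piExpect μ F + piExpect μ G := by
  simp only [piExpect, mul_add, sum_add_distrib]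

lemma piExpect_const_mul (c : ℝ) (F : (ι → Ω) → ℝ) :
    piExpect μ (fun B => c * F B) = c * piExpect μ F := by
  simp only [piExpect, mul_sum, mul_left_comm]

lemma piExpect_sum {κ : Type*} (s : Finset κ) (F : κ → (ι → Ω) → ℝ) :
    piExpect μ (fun B => ∑ a ∈ s, F a B) = ∑ a ∈ s, piExpect μ (F a) := by
  simp only [piExpect, mul_sum]
  exact sum_comm

lemma piExpect_const (hμ : ∑ ω, μ ω = 1) (c : ℝ) :
    piExpect μ (fun _ : ι → Ω => c) = c := by
  simp [piExpect, ← sum_mul, ← Fintype.prod_sum, hμ]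

/-- The involution `(B, ω) ↦ (update B i ω, B i)`
preserves the weight `μ ω * ∏ j, μ (B j)`. -/
lemma piExpect_eval_eq_piExpect_sum (hμ : ∑ ω, μ ω = 1) (i : ι) (F : Ω → (ι → Ω) → ℝ)
    (hF : ∀ ω ω' B, F ω (Function.update B i ω') = F ω B) :
    piExpect μ (fun B => F (B i) B) = piExpect μ (fun B => ∑ ω, μ ω * F ω B) := by
  let e : (ι → Ω) × Ω → (ι → Ω) × Ω := fun Bω => (Function.update Bω.1 i Bω.2, Bω.1 i)
  have he : Function.Involutive e := fun ⟨B, ω⟩ => by simp [e]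
  have hw : ∀ (B : ι → Ω) ω, (∏ j, μ (Function.update B i ω j)) * μ (B i)
      = μ ω * ∏ j, μ (B j) := by
    intro B ω
    simp only [Function.apply_update (fun _ => μ), prod_update_of_mem (mem_univ i),
      ← mul_prod_erase univ (fun j => μ (B j)) (mem_univ i), sdiff_singleton_eq_erase]
    ring
  calc piExpect μ (fun B => F (B i) B)
      = ∑ Bω : (ι → Ω) × Ω, μ Bω.2 * (∏ j, μ (Bω.1 j)) * F (Bω.1 i) Bω.1 := by
        simp only [piExpect, Fintype.sum_prod_type, ← sum_mul, hμ, one_mul]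
    _ = ∑ Bω : (ι → Ω) × Ω, μ Bω.2 * (∏ j, μ (Bω.1 j)) * F Bω.2 Bω.1 := by
        refine Fintype.sum_bijective e he.bijective _ _ fun ⟨B, ω⟩ => ?_
        simp only [e, hF]
        linear_combination (-F (B i) B) * hw B ω
    _ = piExpect μ (fun B => ∑ ω, μ ω * F ω B) := by
        simp only [piExpect, Fintype.sum_prod_type, mul_sum]
        exact sum_congr rfl fun B _ => sum_congr rfl fun ω _ => by ring

lemma piExpect_eval (hμ : ∑ ω, μ ω = 1) (i : ι) (f : Ω → ℝ) :
    piExpect μ (fun B => f (B i)) = ∑ ω, μ ω * f ω := by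
  rw [piExpect_eval_eq_piExpect_sum hμ i (fun ω _ => f ω) fun _ _ _ => rfl, piExpect_const hμ]

lemma piExpect_eval_eval (hμ : ∑ ω, μ ω = 1) {i j : ι} (hij : i ≠ j) (f : Ω → Ω → ℝ) :
    piExpect μ (fun B => f (B i) (B j)) = ∑ a, ∑ b, μ a * μ b * f a b := by
  rw [piExpect_eval_eq_piExpect_sum hμ i (fun ω B => f ω (B j))
      fun _ _ _ => by rw [Function.update_of_ne hij.symm],
    piExpect_eval hμ j (fun b => ∑ a, μ a * f a b), sum_comm]
  simp only [mul_sum]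
  exact sum_congr rfl fun a _ => sum_congr rfl fun b _ => by ring

lemma piExpect_eval_eq_zero (hμ : ∑ ω, μ ω = 1) (i : ι) (F : Ω → (ι → Ω) → ℝ)
    (hF : ∀ ω ω' B, F ω (Function.update B i ω') = F ω B)
    (hF0 : ∀ B, ∑ ω, μ ω * F ω B = 0) :
    piExpect μ (fun B => F (B i) B) = 0 := by
  simp only [piExpect_eval_eq_piExpect_sum hμ i F hF, hF0, piExpect_const hμ]

end ProductWeights

section UStatistic

variable {Ω ι : Type*} [Fintype Ω] [Fintype ι] [DecidableEq ι]

lemma sum_offDiag_univ (f : ι × ι → ℝ) :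
    ∑ ij ∈ (univ : Finset ι).offDiag, f ij = ∑ i, ∑ j, f (i, j) - ∑ i, f (i, i) := by
  rw [eq_sub_iff_add_eq, ← sum_diag univ f, add_comm, ← sum_union (disjoint_diag_offDiag _),
    diag_union_offDiag, sum_product]

lemma card_offDiag_univ :
    ((univ : Finset ι).offDiag.card : ℝ) = Fintype.card ι * (Fintype.card ι - 1) := by
  rw [card_eq_sum_ones, Nat.cast_sum, sum_offDiag_univ]
  simp only [Nat.cast_one, sum_const, card_univ, nsmul_eq_mul, mul_one]
  ring

lemma sum_offDiag_univ_fst (f : ι → ℝ) :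
    ∑ ij ∈ (univ : Finset ι).offDiag, f ij.1 = (Fintype.card ι - 1) * ∑ i, f i := by
  simp only [sum_offDiag_univ, sum_const, card_univ, nsmul_eq_mul, ← mul_sum]
  ring

lemma sum_offDiag_univ_snd (f : ι → ℝ) :
    ∑ ij ∈ (univ : Finset ι).offDiag, f ij.2 = (Fintype.card ι - 1) * ∑ i, f i := by
  simp only [sum_offDiag_univ, sum_const, card_univ, nsmul_eq_mul]
  ring

lemma sum_offDiag_sub_mul_sub_of_idempotent (z : ι → ℝ) (hz : ∀ i, z i * z i = z i) (c : ℝ) :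
    ∑ ij ∈ (univ : Finset ι).offDiag, (z ij.1 - c) * (z ij.2 - c)
      = (∑ i, z i - (Fintype.card ι - 1) * c) ^ 2 - ∑ i, z i + (Fintype.card ι - 1) * c ^ 2 := by
  have hsq : ∑ i, (z i - c) * (z i - c) = ∑ i, z i - 2 * c * ∑ i, z i + Fintype.card ι * c ^ 2 := by
    simp only [sub_mul, mul_sub, hz, sum_sub_distrib, sum_const, card_univ, nsmul_eq_mul,
      ← sum_mul, ← mul_sum]
    ring
  rw [sum_offDiag_univ (fun ij => (z ij.1 - c) * (z ij.2 - c))]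
  dsimp only
  rw [← sum_mul_sum, hsq, sum_sub_distrib, sum_const, card_univ, nsmul_eq_mul]
  ring

def uStat (h : Ω → Ω → ℝ) (B : ι → Ω) : ℝ :=
  ∑ ij ∈ (univ : Finset ι).offDiag, h (B ij.1) (B ij.2)

variable (μ : Ω → ℝ) (h : Ω → Ω → ℝ)

def hoeffdingMean : ℝ := ∑ a, ∑ b, μ a * μ b * h a b

def hoeffding1 (a : Ω) : ℝ := ∑ b, μ b * h a b - hoeffdingMean μ h

def hoeffding2 (a b : Ω) : ℝ :=
  h a b - hoeffding1 μ h a - hoeffding1 μ h b - hoeffdingMean μ h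

lemma uStat_eq_hoeffding (B : ι → Ω) :
    uStat h B = Fintype.card ι * (Fintype.card ι - 1) * hoeffdingMean μ h
      + 2 * (Fintype.card ι - 1) * ∑ i, hoeffding1 μ h (B i)
      + uStat (hoeffding2 μ h) B := by
  simp only [uStat, hoeffding2, sum_sub_distrib, sum_const, nsmul_eq_mul, card_offDiag_univ,
    sum_offDiag_univ_fst (fun i => hoeffding1 μ h (B i)),
    sum_offDiag_univ_snd (fun i => hoeffding1 μ h (B i))]
  ring

variable {μ h}

lemma sum_mul_hoeffding1 (hμ : ∑ ω, μ ω = 1) : ∑ a, μ a * hoeffding1 μ h a = 0 := by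
  simp only [hoeffding1, mul_sub, sum_sub_distrib, ← sum_mul, hμ, one_mul]
  simp only [hoeffdingMean, mul_sum, mul_assoc, sub_self]

lemma hoeffding2_comm (hh : ∀ a b, h a b = h b a) (a b : Ω) :
    hoeffding2 μ h a b = hoeffding2 μ h b a := by
  simp only [hoeffding2, hh a b]
  ring

lemma sum_mul_hoeffding2 (hμ : ∑ ω, μ ω = 1) (hh : ∀ a b, h a b = h b a) (b : Ω) :
    ∑ a, μ a * hoeffding2 μ h a b = 0 := by
  have h1 := sum_mul_hoeffding1 (h := h) hμ
  simp only [hoeffding2, mul_sub, sum_sub_distrib, ← sum_mul, hμ, one_mul, h1]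
  simp only [hoeffding1, hh _ b]
  ring

lemma piExpect_uStat (hμ : ∑ ω, μ ω = 1) :
    piExpect μ (fun B : ι → Ω => uStat h B)
      = Fintype.card ι * (Fintype.card ι - 1) * hoeffdingMean μ h := by
  have hq : ∀ q ∈ (univ : Finset ι).offDiag,
      piExpect μ (fun B => h (B q.1) (B q.2)) = hoeffdingMean μ h := fun q hq =>
    piExpect_eval_eval hμ (mem_offDiag.mp hq).2.2 h
  simp only [uStat]
  rw [piExpect_sum, sum_congr rfl hq, sum_const, nsmul_eq_mul, card_offDiag_univ]

section Degenerate

variable {g : Ω → ℝ} (hμ : ∑ ω, μ ω = 1) (hg : ∑ a, μ a * g a = 0)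
  (hh : ∀ a b, h a b = h b a) (hdeg : ∀ b, ∑ a, μ a * h a b = 0)
include hμ

include hg in
lemma piExpect_sum_eval_of_centered : piExpect μ (fun B : ι → Ω => ∑ i, g (B i)) = 0 := by
  simp [piExpect_sum, piExpect_eval hμ, hg]

include hg in
lemma piExpect_sum_eval_sq_of_centered :
    piExpect μ (fun B : ι → Ω => (∑ i, g (B i)) ^ 2)
      = Fintype.card ι * ∑ a, μ a * g a ^ 2 := by
  have hil : ∀ i l : ι, piExpect μ (fun B => g (B i) * g (B l))
      = if i = l then ∑ a, μ a * g a ^ 2 else 0 := by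
    intro i l
    split_ifs with hil
    · subst hil
      exact (piExpect_eval hμ i fun a => g a * g a).trans (by simp only [sq])
    · exact piExpect_eval_eq_zero hμ i (fun a B => g a * g (B l))
        (fun _ _ _ => by rw [Function.update_of_ne (Ne.symm hil)])
        (fun B => by simp only [← mul_assoc, ← sum_mul, hg, zero_mul])
  simp only [sq, sum_mul_sum, piExpect_sum, hil, sum_ite_eq, mem_univ, if_true, sum_const,
    card_univ, nsmul_eq_mul]

include hdeg in
lemma piExpect_uStat_of_degenerate : piExpect μ (fun B : ι → Ω => uStat h B) = 0 := by
  have h0 : hoeffdingMean μ h = 0 := by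
    rw [hoeffdingMean, sum_comm]
    refine sum_eq_zero fun b _ => ?_
    rw [← mul_zero (μ b), ← hdeg b, mul_sum]
    exact sum_congr rfl fun a _ => by ring
  rw [piExpect_uStat hμ, h0, mul_zero]

include hg hh hdeg in
lemma piExpect_eval_mul_eval_eval_of_degenerate (i : ι) {l m : ι} (hlm : l ≠ m) :
    piExpect μ (fun B => g (B i) * h (B l) (B m)) = 0 := by
  by_cases hil : i = l
  · subst hil
    refine piExpect_eval_eq_zero hμ m (fun b B => g (B i) * h (B i) b)
      (fun _ _ _ => by rw [Function.update_of_ne hlm]) fun B => ?_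
    rw [← mul_zero (g (B i)), ← hdeg (B i), mul_sum]
    exact sum_congr rfl fun b _ => by rw [hh]; ring
  by_cases him : i = m
  · subst him
    refine piExpect_eval_eq_zero hμ l (fun a B => g (B i) * h a (B i))
      (fun _ _ _ => by rw [Function.update_of_ne (Ne.symm hlm)]) fun B => ?_
    rw [← mul_zero (g (B i)), ← hdeg (B i), mul_sum]
    exact sum_congr rfl fun a _ => by ring
  refine piExpect_eval_eq_zero hμ i (fun a B => g a * h (B l) (B m))
    (fun _ _ _ => by rw [Function.update_of_ne (Ne.symm hil), Function.update_of_ne (Ne.symm him)])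
    fun B => ?_
  rw [← zero_mul (h (B l) (B m)), ← hg, sum_mul]
  exact sum_congr rfl fun a _ => by ring

include hg hh hdeg in
lemma piExpect_sum_eval_mul_uStat_of_degenerate :
    piExpect μ (fun B : ι → Ω => (∑ i, g (B i)) * uStat h B) = 0 := by
  simp only [uStat, sum_mul_sum, piExpect_sum]
  exact sum_eq_zero fun i _ => sum_eq_zero fun q hq =>
    piExpect_eval_mul_eval_eval_of_degenerate hμ hg hh hdeg i (mem_offDiag.mp hq).2.2

include hh hdeg in
/-- Unless `{r.1, r.2} = {q.1, q.2}`, some index occurs only once and integrating it out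
gives `0`. -/
lemma piExpect_eval_eval_mul_eval_eval_of_degenerate {q : ι × ι} (hq : q.1 ≠ q.2)
    (r : ι × ι) :
    piExpect μ (fun B => h (B q.1) (B q.2) * h (B r.1) (B r.2))
      = (if r = q then ∑ a, ∑ b, μ a * μ b * h a b ^ 2 else 0)
        + (if r = q.swap then ∑ a, ∑ b, μ a * μ b * h a b ^ 2 else 0) := by
  obtain ⟨i, j⟩ := q
  obtain ⟨l, m⟩ := r
  have hij : i ≠ j := hq
  simp only [Prod.mk.injEq, Prod.swap_prod_mk]
  by_cases hi : i = l ∨ i = m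
  · by_cases hj : j = l ∨ j = m
    · rcases hi with rfl | rfl <;> rcases hj with rfl | rfl
      · exact absurd rfl hij
      · simpa [hij] using (piExpect_eval_eval hμ hij fun a b => h a b * h a b).trans
          (sum_congr rfl fun a _ => sum_congr rfl fun b _ => by rw [sq])
      · simpa [hij] using (piExpect_eval_eval hμ hij fun a b => h a b * h b a).trans
          (sum_congr rfl fun a _ => sum_congr rfl fun b _ => by rw [hh b a, sq])
      · exact absurd rfl hij
    · simp only [not_or] at hj
      rw [if_neg (fun hr => hj.2 hr.2.symm), if_neg (fun hr => hj.1 hr.1.symm), add_zero]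
      refine piExpect_eval_eq_zero hμ j (fun b B => h (B i) b * h (B l) (B m))
        (fun _ _ _ => by simp only [Function.update_of_ne hij, Function.update_of_ne (Ne.symm hj.1),
          Function.update_of_ne (Ne.symm hj.2)]) fun B => ?_
      rw [← zero_mul (h (B l) (B m)), ← hdeg (B i), sum_mul]
      exact sum_congr rfl fun b _ => by rw [hh]; ring
  · simp only [not_or] at hi
    rw [if_neg (fun hr => hi.1 hr.1.symm), if_neg (fun hr => hi.2 hr.2.symm), add_zero]
    refine piExpect_eval_eq_zero hμ i (fun a B => h a (B j) * h (B l) (B m))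
      (fun _ _ _ => by simp only [Function.update_of_ne (Ne.symm hij),
        Function.update_of_ne (Ne.symm hi.1), Function.update_of_ne (Ne.symm hi.2)]) fun B => ?_
    rw [← zero_mul (h (B l) (B m)), ← hdeg (B j), sum_mul]
    exact sum_congr rfl fun a _ => by ring

include hh hdeg in
lemma piExpect_uStat_sq_of_degenerate :
    piExpect μ (fun B : ι → Ω => uStat h B ^ 2)
      = 2 * (Fintype.card ι * (Fintype.card ι - 1)) * ∑ a, ∑ b, μ a * μ b * h a b ^ 2 := by
  have hswap : ∀ q ∈ (univ : Finset ι).offDiag, q.swap ∈ (univ : Finset ι).offDiag := by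
    intro q hq
    simpa [eq_comm] using hq
  simp only [sq, uStat, sum_mul_sum, piExpect_sum]
  rw [sum_congr rfl fun q hq => sum_congr rfl fun r _ =>
    piExpect_eval_eval_mul_eval_eval_of_degenerate hμ hh hdeg (mem_offDiag.mp hq).2.2 r]
  simp only [sum_add_distrib, sum_ite_eq']
  rw [sum_congr rfl fun q hq => if_pos hq, sum_congr rfl fun q hq => if_pos (hswap q hq),
    sum_const, nsmul_eq_mul, card_offDiag_univ]
  simp only [sq]
  ring

end Degenerate

theorem piExpect_uStat_sq_sub_sq (hμ : ∑ ω, μ ω = 1) (hh : ∀ a b, h a b = h b a) :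
    piExpect μ (fun B : ι → Ω => uStat h B ^ 2) - piExpect μ (fun B : ι → Ω => uStat h B) ^ 2
      = 4 * Fintype.card ι * (Fintype.card ι - 1) ^ 2 * ∑ a, μ a * hoeffding1 μ h a ^ 2
        + 2 * (Fintype.card ι * (Fintype.card ι - 1))
          * ∑ a, ∑ b, μ a * μ b * hoeffding2 μ h a b ^ 2 := by
  have h1 := sum_mul_hoeffding1 (h := h) hμ
  have h2 := sum_mul_hoeffding2 hμ hh
  have h2' := hoeffding2_comm (μ := μ) hh
  obtain ⟨c, hc⟩ : ∃ c, c = Fintype.card ι * (Fintype.card ι - 1) * hoeffdingMean μ h := ⟨_, rfl⟩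
  have hsq : ∀ B : ι → Ω, uStat h B ^ 2
      = c ^ 2 + 4 * (Fintype.card ι - 1) * c * ∑ i, hoeffding1 μ h (B i)
        + 2 * c * uStat (hoeffding2 μ h) B
        + 4 * (Fintype.card ι - 1) ^ 2 * (∑ i, hoeffding1 μ h (B i)) ^ 2
        + 4 * (Fintype.card ι - 1) * ((∑ i, hoeffding1 μ h (B i)) * uStat (hoeffding2 μ h) B)
        + uStat (hoeffding2 μ h) B ^ 2 := fun B => by
    rw [uStat_eq_hoeffding μ h B, hc]
    ring
  rw [piExpect_uStat hμ, ← hc]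
  simp only [hsq, piExpect_add, piExpect_const_mul, piExpect_const hμ,
    piExpect_sum_eval_of_centered hμ h1, piExpect_uStat_of_degenerate hμ h2,
    piExpect_sum_eval_sq_of_centered hμ h1,
    piExpect_sum_eval_mul_uStat_of_degenerate hμ h1 h2' h2,
    piExpect_uStat_sq_of_degenerate hμ h2' h2]
  ring

end UStatistic

section InnerKernel

variable {Ω κ : Type*} [Fintype Ω] [Fintype κ] (μ : Ω → ℝ) (φ : Ω → κ → ℝ)

def innerKernel (a b : Ω) : ℝ := ∑ x, φ a x * φ b x

def featureMean (x : κ) : ℝ := ∑ a, μ a * φ a x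

def featureCov (x y : κ) : ℝ :=
  ∑ a, μ a * ((φ a x - featureMean μ φ x) * (φ a y - featureMean μ φ y))

omit [Fintype Ω] in
lemma innerKernel_comm (a b : Ω) : innerKernel φ a b = innerKernel φ b a := by
  simp only [innerKernel, mul_comm]

lemma hoeffdingMean_innerKernel :
    hoeffdingMean μ (innerKernel φ) = ∑ x, featureMean μ φ x ^ 2 := by
  calc hoeffdingMean μ (innerKernel φ)
      = ∑ a, ∑ b, ∑ x, μ a * φ a x * (μ b * φ b x) := by
        simp only [hoeffdingMean, innerKernel, mul_sum]
        exact sum_congr rfl fun a _ => sum_congr rfl fun b _ => sum_congr rfl fun x _ => by ring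
    _ = ∑ x, ∑ a, ∑ b, μ a * φ a x * (μ b * φ b x) :=
        (sum_congr rfl fun a _ => sum_comm).trans sum_comm
    _ = ∑ x, featureMean μ φ x ^ 2 := by simp only [featureMean, sq, sum_mul_sum]

lemma hoeffding1_innerKernel (a : Ω) :
    hoeffding1 μ (innerKernel φ) a
      = ∑ x, featureMean μ φ x * (φ a x - featureMean μ φ x) := by
  have hmean : ∑ b, μ b * innerKernel φ a b = ∑ x, φ a x * featureMean μ φ x := by
    simp only [innerKernel, featureMean, mul_sum]
    rw [sum_comm]
    exact sum_congr rfl fun x _ => sum_congr rfl fun b _ => by ring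
  rw [hoeffding1, hmean, hoeffdingMean_innerKernel, ← sum_sub_distrib]
  exact sum_congr rfl fun x _ => by ring

lemma hoeffding2_innerKernel (a b : Ω) :
    hoeffding2 μ (innerKernel φ) a b
      = ∑ x, (φ a x - featureMean μ φ x) * (φ b x - featureMean μ φ x) := by
  simp only [hoeffding2, hoeffding1_innerKernel, hoeffdingMean_innerKernel, innerKernel,
    ← sum_sub_distrib]
  exact sum_congr rfl fun x _ => by ring

lemma sum_mul_sum_mul_sq (ξ : Ω → κ → ℝ) (c : κ → ℝ) :
    ∑ a, μ a * (∑ x, c x * ξ a x) ^ 2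
      = ∑ x, ∑ y, c x * c y * ∑ a, μ a * (ξ a x * ξ a y) := by
  simp only [sq, sum_mul_sum]
  simp only [mul_sum]
  rw [sum_comm]
  refine sum_congr rfl fun x _ => ?_
  rw [sum_comm]
  exact sum_congr rfl fun y _ => sum_congr rfl fun a _ => by ring

lemma sum_sum_mul_sum_mul_sq (ξ : Ω → κ → ℝ) :
    ∑ a, ∑ b, μ a * μ b * (∑ x, ξ a x * ξ b x) ^ 2
      = ∑ x, ∑ y, (∑ a, μ a * (ξ a x * ξ a y)) ^ 2 := by
  calc ∑ a, ∑ b, μ a * μ b * (∑ x, ξ a x * ξ b x) ^ 2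
      = ∑ a, ∑ b, ∑ x, ∑ y, μ a * (ξ a x * ξ a y) * (μ b * (ξ b x * ξ b y)) := by
        simp only [sq, sum_mul_sum]
        simp only [mul_sum]
        exact sum_congr rfl fun a _ => sum_congr rfl fun b _ =>
          sum_congr rfl fun x _ => sum_congr rfl fun y _ => by ring
    _ = ∑ a, ∑ x, ∑ y, ∑ b, μ a * (ξ a x * ξ a y) * (μ b * (ξ b x * ξ b y)) :=
        sum_congr rfl fun a _ => sum_comm.trans (sum_congr rfl fun x _ => sum_comm)
    _ = ∑ x, ∑ y, ∑ a, ∑ b, μ a * (ξ a x * ξ a y) * (μ b * (ξ b x * ξ b y)) :=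
        sum_comm.trans (sum_congr rfl fun x _ => sum_comm)
    _ = ∑ x, ∑ y, (∑ a, μ a * (ξ a x * ξ a y)) ^ 2 := by simp only [sq, sum_mul_sum]

lemma sum_mul_hoeffding1_innerKernel_sq :
    ∑ a, μ a * hoeffding1 μ (innerKernel φ) a ^ 2
      = ∑ x, ∑ y, featureMean μ φ x * featureMean μ φ y * featureCov μ φ x y := by
  simp only [hoeffding1_innerKernel]
  exact sum_mul_sum_mul_sq μ (fun a x => φ a x - featureMean μ φ x) _

lemma sum_sum_mul_hoeffding2_innerKernel_sq :
    ∑ a, ∑ b, μ a * μ b * hoeffding2 μ (innerKernel φ) a b ^ 2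
      = ∑ x, ∑ y, featureCov μ φ x y ^ 2 := by
  simp only [hoeffding2_innerKernel]
  exact sum_sum_mul_sum_mul_sq μ (fun a x => φ a x - featureMean μ φ x)

end InnerKernel

lemma sum_prod_mul_prod_ite {κ : Type*} [Fintype κ] [DecidableEq κ] (ν : κ → Bool → ℝ)
    (hν : ∀ j, ν j true + ν j false = 1) (S : Finset κ) :
    ∑ b : κ → Bool, (∏ j, ν j (b j)) * ∏ j ∈ S, (if b j then (1 : ℝ) else 0)
      = ∏ j ∈ S, ν j true := by
  have hfac : ∀ b : κ → Bool, (∏ j, ν j (b j)) * ∏ j ∈ S, (if b j then (1 : ℝ) else 0)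
      = ∏ j, ν j (b j) * (if j ∈ S then (if b j then 1 else 0) else 1) := fun b => by
    rw [← prod_ite_mem_eq S, ← prod_mul_distrib]
  simp only [hfac, Fintype.sum_bool, if_true, Bool.false_eq_true, if_false,
    ← Fintype.prod_sum (fun j v => ν j v * (if j ∈ S then (if v then 1 else 0) else 1))]
  rw [← prod_ite_mem_eq S]
  refine prod_congr rfl fun j _ => ?_
  split_ifs <;> simp [hν]

lemma le_one_of_sum_eq_one {κ : Type*} [Fintype κ] {p : κ → ℝ} (hp0 : ∀ x, 0 ≤ p x)
    (hp1 : ∑ x, p x = 1) (x : κ) : p x ≤ 1 :=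
  hp1 ▸ single_le_sum (fun i _ => hp0 i) (mem_univ x)

section Rappor

variable {k : ℕ} {ε : ℝ} {p : Fin k → ℝ}

lemma sq_alphaR_le_one : alphaR ε ^ 2 ≤ 1 := by
  have he := Real.exp_pos (ε / 2)
  rw [alphaR, div_pow, div_le_one (by positivity)]
  nlinarith

lemma alphaR_mul_add_betaR_mem_Icc {t : ℝ} (ht : t ∈ Set.Icc (0 : ℝ) 1) :
    alphaR ε * t + betaR ε ∈ Set.Icc (0 : ℝ) 1 := by
  have he := Real.exp_pos (ε / 2)
  have hβ : betaR ε * (Real.exp (ε / 2) + 1) = 1 := by rw [betaR]; field_simp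
  have hαβ : (alphaR ε + betaR ε) * (Real.exp (ε / 2) + 1) = Real.exp (ε / 2) := by
    rw [alphaR, betaR]; field_simp; ring
  have hβ0 : 0 ≤ betaR ε := by rw [betaR]; positivity
  obtain ⟨ht0, ht1⟩ := ht
  constructor <;> nlinarith [mul_nonneg ht0 (sub_nonneg.mpr ht1)]

noncomputable def rapporBitProb (ε : ℝ) (x j : Fin k) (v : Bool) : ℝ :=
  if v then (if j = x then Real.exp (ε / 2) / (Real.exp (ε / 2) + 1)
              else 1 / (Real.exp (ε / 2) + 1))
  else (if j = x then 1 / (Real.exp (ε / 2) + 1)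
              else Real.exp (ε / 2) / (Real.exp (ε / 2) + 1))

lemma rapporOne_eq_sum_prod (b : Fin k → Bool) :
    rapporOne ε p b = ∑ x, p x * ∏ j, rapporBitProb ε x j (b j) := rfl

lemma rapporBitProb_true_add_false (x j : Fin k) :
    rapporBitProb ε x j true + rapporBitProb ε x j false = 1 := by
  have : Real.exp (ε / 2) + 1 ≠ 0 := by positivity
  simp only [rapporBitProb, if_true, Bool.false_eq_true, if_false]
  split_ifs
  · field_simp
  · field_simp
    ring

lemma rapporBitProb_true (x j : Fin k) :
    rapporBitProb ε x j true = betaR ε + if j = x then alphaR ε else 0 := by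
  have : Real.exp (ε / 2) + 1 ≠ 0 := by positivity
  simp only [rapporBitProb, if_true, betaR, alphaR]
  split_ifs
  · field_simp
    ring
  · simp

lemma sum_rapporOne_mul_prod_ite (S : Finset (Fin k)) :
    ∑ b, rapporOne ε p b * ∏ j ∈ S, (if b j then (1 : ℝ) else 0)
      = ∑ x, p x * ∏ j ∈ S, (betaR ε + if j = x then alphaR ε else 0) := by
  simp only [rapporOne_eq_sum_prod, sum_mul, mul_assoc]
  rw [sum_comm]
  simp only [← mul_sum, sum_prod_mul_prod_ite _ (rapporBitProb_true_add_false _) S,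
    rapporBitProb_true]

variable (hp1 : ∑ x, p x = 1)
include hp1

lemma sum_rapporOne : ∑ b, rapporOne ε p b = 1 := by
  simpa [hp1] using sum_rapporOne_mul_prod_ite (ε := ε) (p := p) ∅

lemma sum_rapporOne_mul_ite (x : Fin k) :
    ∑ b, rapporOne ε p b * (if b x then 1 else 0) = alphaR ε * p x + betaR ε := by
  have h := sum_rapporOne_mul_prod_ite (ε := ε) (p := p) {x}
  simp only [prod_singleton] at h
  rw [h]
  simp only [mul_add, sum_add_distrib, ← sum_mul, hp1, mul_ite, mul_zero, sum_ite_eq, mem_univ,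
    if_true]
  ring

lemma sum_rapporOne_mul_ite_mul_ite {x y : Fin k} (hxy : x ≠ y) :
    ∑ b, rapporOne ε p b * ((if b x then 1 else 0) * (if b y then 1 else 0))
      = betaR ε ^ 2 + alphaR ε * betaR ε * (p x + p y) := by
  have h := sum_rapporOne_mul_prod_ite (ε := ε) (p := p) {x, y}
  simp only [prod_pair hxy] at h
  rw [h]
  have hterm : ∀ t, p t * ((betaR ε + if x = t then alphaR ε else 0)
      * (betaR ε + if y = t then alphaR ε else 0))
      = p t * betaR ε ^ 2 + (if x = t then p t else 0) * (alphaR ε * betaR ε)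
        + (if y = t then p t else 0) * (alphaR ε * betaR ε) := fun t => by
    by_cases hx : x = t <;> by_cases hy : y = t
    · exact absurd (hx.trans hy.symm) hxy
    all_goals simp only [hx, hy, if_true, if_false]; ring
  simp only [hterm, sum_add_distrib, ← sum_mul, hp1, sum_ite_eq, mem_univ, if_true]
  ring

noncomputable def rapporFeature (ε : ℝ) (b : Fin k → Bool) (x : Fin k) : ℝ :=
  (if b x then 1 else 0) - (alphaR ε / k + betaR ε)

lemma featureMean_rapporFeature (x : Fin k) :
    featureMean (rapporOne ε p) (rapporFeature ε) x = alphaR ε * (p x - 1 / k) := by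
  simp only [featureMean, rapporFeature, mul_sub, sum_sub_distrib, sum_rapporOne_mul_ite hp1,
    ← sum_mul, sum_rapporOne hp1]
  ring

lemma rapporFeature_sub_featureMean (b : Fin k → Bool) (x : Fin k) :
    rapporFeature ε b x - featureMean (rapporOne ε p) (rapporFeature ε) x
      = (if b x then 1 else 0) - (alphaR ε * p x + betaR ε) := by
  rw [featureMean_rapporFeature hp1, rapporFeature]
  ring

lemma featureCov_rapporFeature (x y : Fin k) :
    featureCov (rapporOne ε p) (rapporFeature ε) x y
      = (if x = y then (alphaR ε * p x + betaR ε) * (1 - (alphaR ε * p x + betaR ε))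
          + alphaR ε ^ 2 * p x ^ 2 else 0) - alphaR ε ^ 2 * p x * p y := by
  set q := fun x => alphaR ε * p x + betaR ε
  have hexpand : featureCov (rapporOne ε p) (rapporFeature ε) x y
      = ∑ b, rapporOne ε p b * ((if b x then 1 else 0) * (if b y then 1 else 0))
        - q x * ∑ b, rapporOne ε p b * (if b y then 1 else 0)
        - q y * ∑ b, rapporOne ε p b * (if b x then 1 else 0)
        + q x * q y * ∑ b, rapporOne ε p b := by
    simp only [featureCov, rapporFeature_sub_featureMean hp1, mul_sum, ← sum_sub_distrib,
      ← sum_add_distrib]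
    exact sum_congr rfl fun b _ => by ring
  rw [hexpand, sum_rapporOne_mul_ite hp1, sum_rapporOne_mul_ite hp1, sum_rapporOne hp1]
  split_ifs with hxy
  · subst hxy
    have hidem : ∀ b : Fin k → Bool,
        (if b x then (1 : ℝ) else 0) * (if b x then 1 else 0) = if b x then 1 else 0 :=
      fun b => by split_ifs <;> norm_num
    simp only [hidem, sum_rapporOne_mul_ite hp1, q]
    ring
  · rw [sum_rapporOne_mul_ite_mul_ite hp1 hxy]
    ring

variable (hp0 : ∀ x, 0 ≤ p x)
include hp0

lemma sum_sum_mul_featureCov_rapporFeature_le (c : Fin k → ℝ) :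
    ∑ x, ∑ y, c x * c y * featureCov (rapporOne ε p) (rapporFeature ε) x y
      ≤ 2 * ∑ x, c x ^ 2 := by
  have hform : ∑ x, ∑ y, c x * c y * featureCov (rapporOne ε p) (rapporFeature ε) x y
      = ∑ x, c x ^ 2 * ((alphaR ε * p x + betaR ε) * (1 - (alphaR ε * p x + betaR ε))
          + alphaR ε ^ 2 * p x ^ 2) - alphaR ε ^ 2 * (∑ x, c x * p x) ^ 2 := by
    simp only [featureCov_rapporFeature hp1, mul_sub, sum_sub_distrib, mul_ite, mul_zero,
      sum_ite_eq, mem_univ, if_true]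
    congr 1
    · exact sum_congr rfl fun x _ => by ring
    · rw [sq (∑ x, c x * p x), sum_mul_sum, mul_sum]
      refine sum_congr rfl fun x _ => ?_
      rw [mul_sum]
      exact sum_congr rfl fun y _ => by ring
  have hdiag : ∀ x, c x ^ 2 * ((alphaR ε * p x + betaR ε) * (1 - (alphaR ε * p x + betaR ε))
      + alphaR ε ^ 2 * p x ^ 2) ≤ 2 * c x ^ 2 := fun x => by
    have hα := sq_alphaR_le_one (ε := ε)
    have hp := le_one_of_sum_eq_one hp0 hp1 x
    have hαp : alphaR ε ^ 2 * p x ^ 2 ≤ 1 :=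
      mul_le_one₀ hα (sq_nonneg _) (pow_le_one₀ (hp0 x) hp)
    nlinarith [sq_nonneg (alphaR ε * p x + betaR ε - 1 / 2), sq_nonneg (c x)]
  rw [hform, mul_sum]
  linarith [sum_le_sum fun x (_ : x ∈ univ) => hdiag x,
    mul_nonneg (sq_nonneg (alphaR ε)) (sq_nonneg (∑ x, c x * p x))]

lemma sum_sum_featureCov_rapporFeature_sq_le :
    ∑ x, ∑ y, featureCov (rapporOne ε p) (rapporFeature ε) x y ^ 2 ≤ 2 * k := by
  have hp := le_one_of_sum_eq_one hp0 hp1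
  have hentry : ∀ x y, featureCov (rapporOne ε p) (rapporFeature ε) x y ^ 2
      ≤ (if x = y then 1 / 16 else 0) + p x * p y := fun x y => by
    rw [featureCov_rapporFeature hp1]
    split_ifs with hxy
    · subst hxy
      obtain ⟨hq0, hq1⟩ := alphaR_mul_add_betaR_mem_Icc (ε := ε) ⟨hp0 x, hp x⟩
      have h0 : 0 ≤ (alphaR ε * p x + betaR ε) * (1 - (alphaR ε * p x + betaR ε)) :=
        mul_nonneg hq0 (by linarith)
      nlinarith [sq_nonneg (alphaR ε * p x + betaR ε - 1 / 2), mul_nonneg (hp0 x) (hp0 x)]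
    · have hα := sq_alphaR_le_one (ε := ε)
      have hpp0 : 0 ≤ p x * p y := mul_nonneg (hp0 x) (hp0 y)
      have hpp1 : p x * p y ≤ 1 := mul_le_one₀ (hp x) (hp0 y) (hp y)
      nlinarith [mul_le_mul hα hα (sq_nonneg _) zero_le_one, mul_nonneg hpp0 (sub_nonneg.mpr hpp1),
        mul_nonneg (mul_nonneg (sq_nonneg (alphaR ε ^ 2)) hpp0) hpp0]
  have hk : (1 : ℝ) ≤ k := by
    calc (1 : ℝ) = ∑ x, p x := hp1.symm
      _ ≤ ∑ _x : Fin k, (1 : ℝ) := sum_le_sum fun x _ => hp x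
      _ = k := by simp
  calc ∑ x, ∑ y, featureCov (rapporOne ε p) (rapporFeature ε) x y ^ 2
      ≤ ∑ x : Fin k, ∑ y : Fin k, ((if x = y then 1 / 16 else 0) + p x * p y) :=
        sum_le_sum fun x _ => sum_le_sum fun y _ => hentry x y
    _ = k / 16 + 1 := by
        simp only [sum_add_distrib, sum_ite_eq, mem_univ, if_true, sum_const, card_univ,
          Fintype.card_fin, nsmul_eq_mul, ← mul_sum, ← sum_mul, hp1]
        ring
    _ ≤ 2 * k := by linarith

end Rappor

section RapporStatistic

variable {k n : ℕ} {ε : ℝ} {p : Fin k → ℝ}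

lemma Tstat_eq_uStat (B : Fin n → Fin k → Bool) :
    Tstat ε B = uStat (innerKernel (rapporFeature ε)) B := by
  have hx : ∀ x, ∑ ij ∈ (univ : Finset (Fin n)).offDiag, rapporFeature ε (B ij.1) x
      * rapporFeature ε (B ij.2) x = (Ncount B x - ((n : ℝ) - 1) * (alphaR ε / k + betaR ε)) ^ 2
        - Ncount B x + ((n : ℝ) - 1) * (alphaR ε / k + betaR ε) ^ 2 := fun x => by
    simpa only [Fintype.card_fin, rapporFeature, Ncount] using sum_offDiag_sub_mul_sub_of_idempotent
      (fun i => if B i x then (1 : ℝ) else 0) (fun i => by split_ifs <;> norm_num) _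
  rw [uStat, Tstat]
  simp only [innerKernel]
  rw [sum_comm, sum_congr rfl fun x _ => hx x, sum_add_distrib, sum_const, card_univ,
    Fintype.card_fin, nsmul_eq_mul]
  ring

variable (hp1 : ∑ x, p x = 1)
include hp1

lemma piExpect_Tstat :
    piExpect (rapporOne ε p) (fun B : Fin n → Fin k → Bool => Tstat ε B)
      = n * (n - 1) * ∑ x, (alphaR ε * (p x - 1 / k)) ^ 2 := by
  simp only [Tstat_eq_uStat, piExpect_uStat (sum_rapporOne hp1), hoeffdingMean_innerKernel,
    featureMean_rapporFeature hp1, Fintype.card_fin]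

lemma piExpect_Tstat_sq_sub_sq :
    piExpect (rapporOne ε p) (fun B : Fin n → Fin k → Bool => Tstat ε B ^ 2)
        - piExpect (rapporOne ε p) (fun B : Fin n → Fin k → Bool => Tstat ε B) ^ 2
      = 4 * n * (n - 1) ^ 2 * ∑ x, ∑ y, alphaR ε * (p x - 1 / k) * (alphaR ε * (p y - 1 / k))
          * featureCov (rapporOne ε p) (rapporFeature ε) x y
        + 2 * (n * (n - 1)) * ∑ x, ∑ y, featureCov (rapporOne ε p) (rapporFeature ε) x y ^ 2 := by
  simp only [Tstat_eq_uStat]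
  rw [piExpect_uStat_sq_sub_sq (sum_rapporOne hp1) (innerKernel_comm _)]
  simp only [sum_mul_hoeffding1_innerKernel_sq, sum_sum_mul_hoeffding2_innerKernel_sq,
    featureMean_rapporFeature hp1, Fintype.card_fin]

lemma piExpect_Tstat_sq_sub_sq_le (hp0 : ∀ x, 0 ≤ p x) :
    piExpect (rapporOne ε p) (fun B : Fin n → Fin k → Bool => Tstat ε B ^ 2)
        - piExpect (rapporOne ε p) (fun B : Fin n → Fin k → Bool => Tstat ε B) ^ 2
      ≤ 8 * n * (n * (n - 1)) * ∑ x, (alphaR ε * (p x - 1 / k)) ^ 2 + 4 * k * (n * (n - 1)) := by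
  have hQ := sum_sum_mul_featureCov_rapporFeature_le (ε := ε) hp1 hp0
    fun x => alphaR ε * (p x - 1 / k)
  have hF := sum_sum_featureCov_rapporFeature_sq_le (ε := ε) hp1 hp0
  have hS0 : 0 ≤ ∑ x, (alphaR ε * (p x - 1 / k)) ^ 2 := sum_nonneg fun x _ => sq_nonneg _
  have hnn : (0 : ℝ) ≤ n * (n - 1) := by
    rcases n with _ | n
    · simp
    · rw [Nat.cast_succ, add_sub_cancel_right]; positivity
  have hcube : (n : ℝ) * (n - 1) ^ 2 ≤ n * (n * (n - 1)) := by nlinarith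
  rw [piExpect_Tstat_sq_sub_sq hp1]
  nlinarith [mul_le_mul_of_nonneg_left hQ (by positivity : (0 : ℝ) ≤ 4 * n * (n - 1) ^ 2),
    mul_le_mul_of_nonneg_left hF (by linarith : (0 : ℝ) ≤ 2 * (n * (n - 1))),
    mul_le_mul_of_nonneg_left hcube hS0]

end RapporStatistic

theorem rappor_statistic_variance_general
    (k n : ℕ) (ε : ℝ)
    (p : Fin k → ℝ) (hp0 : ∀ x, 0 ≤ p x) (hp1 : ∑ x, p x = 1) :
    ((∑ B : Fin n → Fin k → Bool, rapporN ε p B * (Tstat ε B) ^ 2)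
          - (∑ B : Fin n → Fin k → Bool, rapporN ε p B * Tstat ε B) ^ 2
        ≤ 4 * (k : ℝ) * (n : ℝ) ^ 2
            + 8 * (n : ℝ) ^ 3 * (alphaR ε) ^ 2 * ∑ x, (p x - 1 / (k : ℝ)) ^ 2)
    ∧ ((∑ B : Fin n → Fin k → Bool, rapporN ε p B * (Tstat ε B) ^ 2)
          - (∑ B : Fin n → Fin k → Bool, rapporN ε p B * Tstat ε B) ^ 2
        ≤ 4 * (k : ℝ) * (n : ℝ) ^ 2
            + 8 * (n : ℝ) * ∑ B : Fin n → Fin k → Bool, rapporN ε p B * Tstat ε B) := by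
  have hvar := piExpect_Tstat_sq_sub_sq_le (n := n) (ε := ε) hp1 hp0
  have hmean : ∑ B : Fin n → Fin k → Bool, rapporN ε p B * Tstat ε B
      = n * (n - 1) * ∑ x, (alphaR ε * (p x - 1 / k)) ^ 2 := piExpect_Tstat hp1
  have hS : ∑ x, (alphaR ε * (p x - 1 / k)) ^ 2 = alphaR ε ^ 2 * ∑ x, (p x - 1 / (k : ℝ)) ^ 2 := by
    simp only [mul_sum, mul_pow]
  have hS0 : 0 ≤ ∑ x, (alphaR ε * (p x - 1 / k)) ^ 2 := sum_nonneg fun x _ => sq_nonneg _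
  have hn0 : (0 : ℝ) ≤ n := n.cast_nonneg
  rw [piExpect_Tstat hp1] at hvar
  rw [hmean, mul_assoc (8 * (n : ℝ) ^ 3), ← hS]
  refine ⟨hvar.trans ?_, hvar.trans ?_⟩ <;> nlinarith [mul_nonneg (mul_nonneg hn0 hn0) hS0]

/-- Variance of the RAPPOR statistic:
`Var(T) ≤ 4kn² + 8n³α_R²‖p − u‖₂²`, which in turn is `4kn² + 8n·E[T]`. -/
theorem rappor_statistic_variance
    (k n : ℕ) (ε : ℝ) (hε0 : 0 < ε) (hε1 : ε ≤ 1)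
    (p : Fin k → ℝ) (hp0 : ∀ x, 0 ≤ p x) (hp1 : ∑ x, p x = 1) :
    ((∑ B : Fin n → Fin k → Bool, rapporN ε p B * (Tstat ε B) ^ 2)
          - (∑ B : Fin n → Fin k → Bool, rapporN ε p B * Tstat ε B) ^ 2
        ≤ 4 * (k : ℝ) * (n : ℝ) ^ 2
            + 8 * (n : ℝ) ^ 3 * (alphaR ε) ^ 2 * ∑ x, (p x - 1 / (k : ℝ)) ^ 2)
    ∧ ((∑ B : Fin n → Fin k → Bool, rapporN ε p B * (Tstat ε B) ^ 2)
          - (∑ B : Fin n → Fin k → Bool, rapporN ε p B * Tstat ε B) ^ 2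
        ≤ 4 * (k : ℝ) * (n : ℝ) ^ 2
            + 8 * (n : ℝ) * ∑ B : Fin n → Fin k → Bool, rapporN ε p B * Tstat ε B) :=
  rappor_statistic_variance_general k n ε p hp0 hp1
end

section
/- Let δ ∈ ℝ^k with Σ_{i∈[k]} δ_i = 0, let X₁,…,X_k be 4-symmetric real random variables with finite fourth moments, and set Z = Σ_{i∈[k]} δ_i X_i. Then E[Z⁴] ≤ 19·E[X₁⁴]·‖δ‖₂⁴. -/
open Finset MeasureTheory

set_option maxHeartbeats 2000000 in
/-- Fourth-moment bound: for a zero-sum vector `δ` and 4-symmetric random variables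
`X₁, …, X_k` (expectations of products of at most four of them depend only on the
multiplicity pattern of the indices) with finite fourth moments, the random variable
`Z = Σ_i δ_i X_i` satisfies `E[Z⁴] ≤ 19·E[X₁⁴]·‖δ‖₂⁴`. -/
theorem perturbation_fourth_moment_bound
    {Ω : Type*} [MeasurableSpace Ω] (μ : Measure Ω) [IsProbabilityMeasure μ]
    (k : ℕ) (hk : 1 ≤ k) (X : Fin k → Ω → ℝ)
    (hXmeas : ∀ i, Measurable (X i))
    (hX4 : ∀ i, Integrable (fun ω => (X i ω) ^ 4) μ)
    (hsym : ∀ (m : ℕ), m ≤ 4 → ∀ σ τ : Fin m → Fin k,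
      (∀ a b, σ a = σ b ↔ τ a = τ b) →
      ∫ ω, ∏ a, X (σ a) ω ∂μ = ∫ ω, ∏ a, X (τ a) ω ∂μ)
    (δ : Fin k → ℝ) (hδ : ∑ i, δ i = 0) :
    (∫ ω, (∑ i, δ i * X i ω) ^ 4 ∂μ)
      ≤ 19 * (∫ ω, (X ⟨0, by omega⟩ ω) ^ 4 ∂μ) * (∑ i, (δ i) ^ 2) ^ 2 := by
  classical
  show (∫ ω, (∑ i, δ i * X i ω) ^ 4 ∂μ)
      ≤ 19 * (∫ ω, (X ⟨0, hk⟩ ω) ^ 4 ∂μ) * (∑ i, (δ i) ^ 2) ^ 2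
  obtain ⟨c, hcdef⟩ : ∃ c : Fin k → Fin k → Fin k → Fin k → ℝ,
      ∀ i j l m, c i j l m = ∫ ω, X i ω * X j ω * X l ω * X m ω ∂μ :=
    ⟨_, fun _ _ _ _ => rfl⟩
  set M4 : ℝ := ∫ ω, (X ⟨0, hk⟩ ω) ^ 4 ∂μ with hM4def
  set S2 : ℝ := ∑ i, (δ i) ^ 2 with hS2def
  have hS2nn : 0 ≤ S2 := Finset.sum_nonneg fun i _ => sq_nonneg _
  -- integrability of quadruple products
  have hint4 : ∀ i j l m : Fin k,
      Integrable (fun ω => X i ω * X j ω * X l ω * X m ω) μ := by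
    intro i j l m
    have hmeas : Measurable fun ω => X i ω * X j ω * X l ω * X m ω :=
      (((hXmeas i).mul (hXmeas j)).mul (hXmeas l)).mul (hXmeas m)
    have hbound : Integrable
        (fun ω => X i ω ^ 4 + X j ω ^ 4 + X l ω ^ 4 + X m ω ^ 4) μ :=
      (((hX4 i).add (hX4 j)).add (hX4 l)).add (hX4 m)
    refine hbound.mono' hmeas.aestronglyMeasurable ?_
    filter_upwards with ω
    rw [Real.norm_eq_abs, abs_le]
    constructor <;>
      nlinarith [sq_nonneg (X i ω * X j ω - X l ω * X m ω),
        sq_nonneg (X i ω * X j ω + X l ω * X m ω),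
        sq_nonneg (X i ω ^ 2 - X j ω ^ 2), sq_nonneg (X l ω ^ 2 - X m ω ^ 2),
        sq_nonneg (X i ω ^ 2 + X j ω ^ 2), sq_nonneg (X l ω ^ 2 + X m ω ^ 2)]
  -- Cauchy–Schwarz for integrals
  have cs : ∀ f g : Ω → ℝ, Integrable (fun ω => f ω ^ 2) μ →
      Integrable (fun ω => g ω ^ 2) μ → Integrable (fun ω => f ω * g ω) μ →
      (∫ ω, f ω * g ω ∂μ) ^ 2 ≤ (∫ ω, f ω ^ 2 ∂μ) * (∫ ω, g ω ^ 2 ∂μ) := by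
    intro f g hf hg hfg
    have key : ∀ t : ℝ, 0 ≤ (∫ ω, f ω ^ 2 ∂μ) * (t * t)
        + (2 * ∫ ω, f ω * g ω ∂μ) * t + ∫ ω, g ω ^ 2 ∂μ := by
      intro t
      have h1 : 0 ≤ ∫ ω, (t * f ω + g ω) ^ 2 ∂μ :=
        integral_nonneg fun ω => sq_nonneg _
      have h2 : (fun ω => (t * f ω + g ω) ^ 2)
          = fun ω => (t * t) * f ω ^ 2 + ((2 * t) * (f ω * g ω) + g ω ^ 2) :=
        funext fun ω => by ring
      rw [h2] at h1
      have eA : (∫ ω, ((t * t) * f ω ^ 2 + ((2 * t) * (f ω * g ω) + g ω ^ 2)) ∂μ)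
          = (∫ ω, (t * t) * f ω ^ 2 ∂μ) + ∫ ω, ((2 * t) * (f ω * g ω) + g ω ^ 2) ∂μ :=
        integral_add (hf.const_mul _) ((hfg.const_mul _).add hg)
      have eB : (∫ ω, ((2 * t) * (f ω * g ω) + g ω ^ 2) ∂μ)
          = (∫ ω, (2 * t) * (f ω * g ω) ∂μ) + ∫ ω, g ω ^ 2 ∂μ :=
        integral_add (hfg.const_mul _) hg
      rw [eA, eB, integral_const_mul, integral_const_mul] at h1
      linarith
    have hd := discrim_le_zero key
    rw [discrim] at hd
    nlinarith [hd]
  have hM4nn : 0 ≤ M4 := integral_nonneg fun ω => by positivity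
  -- all fourth moments are equal
  have hX4eq : ∀ i : Fin k, (∫ ω, X i ω ^ 4 ∂μ) = M4 := by
    intro i
    have h := hsym 4 le_rfl (fun _ => i) (fun _ => (⟨0, hk⟩ : Fin k))
      (fun a b => by simp)
    simpa [Finset.prod_const] using h
  -- helper: integral congruence
  have hIC : ∀ f g : Ω → ℝ, (∀ ω, f ω = g ω) → (∫ ω, f ω ∂μ) = ∫ ω, g ω ∂μ :=
    fun f g h => integral_congr_ae (Filter.Eventually.of_forall h)
  -- c i i j j lies in [0, M4]
  have hcsq : ∀ i j : Fin k, 0 ≤ c i i j j ∧ c i i j j ≤ M4 := by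
    intro i j
    have h0 : 0 ≤ c i i j j := by
      rw [hcdef, hIC _ (fun ω => (X i ω * X j ω) ^ 2) (fun ω => by ring)]
      exact integral_nonneg fun ω => sq_nonneg _
    refine ⟨h0, ?_⟩
    have h2 := cs (fun ω => X i ω ^ 2) (fun ω => X j ω ^ 2)
      ((hX4 i).congr (Filter.Eventually.of_forall fun ω => by ring))
      ((hX4 j).congr (Filter.Eventually.of_forall fun ω => by ring))
      ((hint4 i i j j).congr (Filter.Eventually.of_forall fun ω => by ring))
    rw [hIC (fun ω => (X i ω ^ 2) ^ 2) (fun ω => X i ω ^ 4) (fun ω => by ring),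
      hIC (fun ω => (X j ω ^ 2) ^ 2) (fun ω => X j ω ^ 4) (fun ω => by ring),
      hX4eq i, hX4eq j] at h2
    have h3 : (∫ ω, X i ω ^ 2 * X j ω ^ 2 ∂μ) = c i i j j := by
      rw [hcdef]; exact hIC _ _ fun ω => by ring
    rw [h3] at h2
    nlinarith [h2, h0, hM4nn]
  -- uniform bound |c i j l m| ≤ M4
  have hcb : ∀ i j l m : Fin k, |c i j l m| ≤ M4 := by
    intro i j l m
    have h := cs (fun ω => X i ω * X j ω) (fun ω => X l ω * X m ω)
      ((hint4 i i j j).congr (Filter.Eventually.of_forall fun ω => by ring))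
      ((hint4 l l m m).congr (Filter.Eventually.of_forall fun ω => by ring))
      ((hint4 i j l m).congr (Filter.Eventually.of_forall fun ω => by ring))
    have e1 : (∫ ω, (fun ω => X i ω * X j ω) ω * (fun ω => X l ω * X m ω) ω ∂μ)
        = c i j l m := by rw [hcdef]; exact hIC _ _ fun ω => by ring
    have e2 : (∫ ω, (fun ω => X i ω * X j ω) ω ^ 2 ∂μ) = c i i j j := by
      rw [hcdef]; exact hIC _ _ fun ω => by ring
    have e3 : (∫ ω, (fun ω => X l ω * X m ω) ω ^ 2 ∂μ) = c l l m m := by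
      rw [hcdef]; exact hIC _ _ fun ω => by ring
    rw [e1, e2, e3] at h
    obtain ⟨h4, h5⟩ := hcsq i j
    obtain ⟨h6, h7⟩ := hcsq l m
    rw [abs_le]
    constructor <;> nlinarith [h, h4, h5, h6, h7, hM4nn]
  -- pointwise expansion of the fourth power
  have hpt : ∀ ω : Ω, (∑ i, δ i * X i ω) ^ 4
      = ∑ i, ∑ j, ∑ l, ∑ m,
          (δ i * δ j * δ l * δ m) * (X i ω * X j ω * X l ω * X m ω) := by
    intro ω
    have h2 : (∑ i, δ i * X i ω) * (∑ i, δ i * X i ω)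
        = ∑ i, ∑ j, (δ i * δ j) * (X i ω * X j ω) := by
      rw [Finset.sum_mul_sum]
      exact Finset.sum_congr rfl fun i _ => Finset.sum_congr rfl fun j _ => by ring
    calc (∑ i, δ i * X i ω) ^ 4
        = ((∑ i, δ i * X i ω) * (∑ i, δ i * X i ω))
          * ((∑ i, δ i * X i ω) * (∑ i, δ i * X i ω)) := by ring
      _ = (∑ i, ∑ j, (δ i * δ j) * (X i ω * X j ω))
          * (∑ l, ∑ m, (δ l * δ m) * (X l ω * X m ω)) := by rw [h2]
      _ = ∑ i, ∑ l, (∑ j, (δ i * δ j) * (X i ω * X j ω))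
          * (∑ m, (δ l * δ m) * (X l ω * X m ω)) := by rw [Finset.sum_mul_sum]
      _ = ∑ i, ∑ l, ∑ j, ∑ m,
          (δ i * δ j * δ l * δ m) * (X i ω * X j ω * X l ω * X m ω) := by
          refine Finset.sum_congr rfl fun i _ => Finset.sum_congr rfl fun l _ => ?_
          rw [Finset.sum_mul]
          refine Finset.sum_congr rfl fun j _ => ?_
          rw [Finset.mul_sum]
          exact Finset.sum_congr rfl fun m _ => by ring
      _ = ∑ i, ∑ j, ∑ l, ∑ m,
          (δ i * δ j * δ l * δ m) * (X i ω * X j ω * X l ω * X m ω) :=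
          Finset.sum_congr rfl fun i _ => Finset.sum_comm
  -- integrability of the pieces
  have hintm : ∀ i j l m : Fin k, Integrable
      (fun ω => (δ i * δ j * δ l * δ m) * (X i ω * X j ω * X l ω * X m ω)) μ :=
    fun i j l m => (hint4 i j l m).const_mul _
  have hintl : ∀ i j l : Fin k, Integrable (fun ω => ∑ m,
      (δ i * δ j * δ l * δ m) * (X i ω * X j ω * X l ω * X m ω)) μ :=
    fun i j l => integrable_finset_sum _ fun m _ => hintm i j l m
  have hintj : ∀ i j : Fin k, Integrable (fun ω => ∑ l, ∑ m,
      (δ i * δ j * δ l * δ m) * (X i ω * X j ω * X l ω * X m ω)) μ :=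
    fun i j => integrable_finset_sum _ fun l _ => hintl i j l
  have hinti : ∀ i : Fin k, Integrable (fun ω => ∑ j, ∑ l, ∑ m,
      (δ i * δ j * δ l * δ m) * (X i ω * X j ω * X l ω * X m ω)) μ :=
    fun i => integrable_finset_sum _ fun j _ => hintj i j
  -- the expansion of the integral
  have hZ : (∫ ω, (∑ i, δ i * X i ω) ^ 4 ∂μ)
      = ∑ i, ∑ j, ∑ l, ∑ m, (δ i * δ j * δ l * δ m) * c i j l m := by
    rw [hIC _ _ hpt, integral_finset_sum _ fun i _ => hinti i]
    refine Finset.sum_congr rfl fun i _ => ?_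
    rw [integral_finset_sum _ fun j _ => hintj i j]
    refine Finset.sum_congr rfl fun j _ => ?_
    rw [integral_finset_sum _ fun l _ => hintl i j l]
    refine Finset.sum_congr rfl fun l _ => ?_
    rw [integral_finset_sum _ fun m _ => hintm i j l m]
    refine Finset.sum_congr rfl fun m _ => ?_
    rw [integral_const_mul, hcdef]
  rw [hZ]
  rcases le_or_gt k 4 with hk4 | hk5
  · -- crude bound for small k
    have hstep : ∀ i j l m : Fin k, (δ i * δ j * δ l * δ m) * c i j l m
        ≤ ((|δ i| * |δ j| * |δ l|) * |δ m|) * M4 := by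
      intro i j l m
      calc (δ i * δ j * δ l * δ m) * c i j l m
          ≤ |(δ i * δ j * δ l * δ m) * c i j l m| := le_abs_self _
        _ = ((|δ i| * |δ j| * |δ l|) * |δ m|) * |c i j l m| := by
            rw [abs_mul, abs_mul, abs_mul, abs_mul]
        _ ≤ ((|δ i| * |δ j| * |δ l|) * |δ m|) * M4 :=
            mul_le_mul_of_nonneg_left (hcb i j l m) (by positivity)
    have hsum_le : (∑ i, ∑ j, ∑ l, ∑ m, (δ i * δ j * δ l * δ m) * c i j l m)
        ≤ ∑ i, ∑ j, ∑ l, ∑ m, ((|δ i| * |δ j| * |δ l|) * |δ m|) * M4 :=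
      Finset.sum_le_sum fun i _ => Finset.sum_le_sum fun j _ =>
        Finset.sum_le_sum fun l _ => Finset.sum_le_sum fun m _ => hstep i j l m
    set Sa : ℝ := ∑ i, |δ i| with hSadef
    have hSann : 0 ≤ Sa := Finset.sum_nonneg fun i _ => abs_nonneg _
    have hL1 : ∀ i j l : Fin k, (∑ m, ((|δ i| * |δ j| * |δ l|) * |δ m|) * M4)
        = (((|δ i| * |δ j|) * |δ l|) * M4) * Sa := by
      intro i j l
      rw [Finset.sum_congr rfl fun m (_ : m ∈ univ) =>
        (by ring : ((|δ i| * |δ j| * |δ l|) * |δ m|) * M4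
          = (((|δ i| * |δ j|) * |δ l|) * M4) * |δ m|), ← Finset.mul_sum, ← hSadef]
    have hL2 : ∀ i j : Fin k, (∑ l, (((|δ i| * |δ j|) * |δ l|) * M4) * Sa)
        = (((|δ i| * |δ j|) * M4) * Sa) * Sa := by
      intro i j
      rw [Finset.sum_congr rfl fun l (_ : l ∈ univ) =>
        (by ring : (((|δ i| * |δ j|) * |δ l|) * M4) * Sa
          = (((|δ i| * |δ j|) * M4) * Sa) * |δ l|), ← Finset.mul_sum, ← hSadef]
    have hL3 : ∀ i : Fin k, (∑ j, (((|δ i| * |δ j|) * M4) * Sa) * Sa)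
        = (((|δ i| * M4) * Sa) * Sa) * Sa := by
      intro i
      rw [Finset.sum_congr rfl fun j (_ : j ∈ univ) =>
        (by ring : (((|δ i| * |δ j|) * M4) * Sa) * Sa
          = (((|δ i| * M4) * Sa) * Sa) * |δ j|), ← Finset.mul_sum, ← hSadef]
    have hL4 : (∑ i, (((|δ i| * M4) * Sa) * Sa) * Sa) = M4 * (Sa * Sa * Sa * Sa) := by
      rw [Finset.sum_congr rfl fun i (_ : i ∈ univ) =>
        (by ring : (((|δ i| * M4) * Sa) * Sa) * Sa = ((M4 * Sa) * Sa * Sa) * |δ i|),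
        ← Finset.mul_sum, ← hSadef]
      ring
    have htot : (∑ i, ∑ j, ∑ l, ∑ m, ((|δ i| * |δ j| * |δ l|) * |δ m|) * M4)
        = M4 * (Sa * Sa * Sa * Sa) := by
      rw [Finset.sum_congr rfl fun i (_ : i ∈ univ) => Finset.sum_congr rfl
          fun j (_ : j ∈ univ) => Finset.sum_congr rfl fun l (_ : l ∈ univ) => hL1 i j l,
        Finset.sum_congr rfl fun i (_ : i ∈ univ) => Finset.sum_congr rfl
          fun j (_ : j ∈ univ) => hL2 i j,
        Finset.sum_congr rfl fun i (_ : i ∈ univ) => hL3 i, hL4]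
    have hCS : Sa ^ 2 ≤ (k : ℝ) * S2 := by
      have h := Finset.sum_mul_sq_le_sq_mul_sq Finset.univ (fun i : Fin k => |δ i|)
        (fun _ => (1 : ℝ))
      simp only [mul_one, one_pow, sq_abs, Finset.sum_const, Finset.card_univ,
        Fintype.card_fin, nsmul_eq_mul] at h
      rw [hSadef, hS2def]
      linarith [h]
    have hk4' : (k : ℝ) ≤ 4 := by exact_mod_cast hk4
    have hCS4 : Sa ^ 2 ≤ 4 * S2 := by nlinarith [hCS, hS2nn, hk4']
    have hfinal : M4 * (Sa * Sa * Sa * Sa) ≤ 19 * M4 * S2 ^ 2 := by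
      have h16 : Sa * Sa * Sa * Sa ≤ 16 * (S2 * S2) := by
        nlinarith [mul_le_mul hCS4 hCS4 (sq_nonneg Sa)
          (by nlinarith [hS2nn] : (0:ℝ) ≤ 4 * S2)]
      have h17 := mul_le_mul_of_nonneg_left h16 hM4nn
      nlinarith [h17, mul_nonneg hM4nn (mul_nonneg hS2nn hS2nn)]
    exact (hsum_le.trans (le_of_eq htot)).trans hfinal

  · -- main case: k ≥ 5
    set r0 : Fin k := ⟨0, by omega⟩ with hr0def
    set r1 : Fin k := ⟨1, by omega⟩ with hr1def
    set r2 : Fin k := ⟨2, by omega⟩ with hr2def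
    set r3 : Fin k := ⟨3, by omega⟩ with hr3def
    have hr01 : r0 ≠ r1 := by simp [hr0def, hr1def, Fin.ext_iff]
    have hr02 : r0 ≠ r2 := by simp [hr0def, hr2def, Fin.ext_iff]
    have hr03 : r0 ≠ r3 := by simp [hr0def, hr3def, Fin.ext_iff]
    have hr12 : r1 ≠ r2 := by simp [hr1def, hr2def, Fin.ext_iff]
    have hr13 : r1 ≠ r3 := by simp [hr1def, hr3def, Fin.ext_iff]
    have hr23 : r2 ≠ r3 := by simp [hr2def, hr3def, Fin.ext_iff]
    -- pattern invariance
    have hpat : ∀ i j l m i' j' l' m' : Fin k,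
        ((i = j) ↔ (i' = j')) → ((i = l) ↔ (i' = l')) → ((i = m) ↔ (i' = m')) →
        ((j = l) ↔ (j' = l')) → ((j = m) ↔ (j' = m')) → ((l = m) ↔ (l' = m')) →
        c i j l m = c i' j' l' m' := by
      intro i j l m i' j' l' m' h1 h2 h3 h4 h5 h6
      have h1' : (j = i) ↔ (j' = i') :=
        ⟨fun h => (h1.mp h.symm).symm, fun h => (h1.mpr h.symm).symm⟩
      have h2' : (l = i) ↔ (l' = i') :=
        ⟨fun h => (h2.mp h.symm).symm, fun h => (h2.mpr h.symm).symm⟩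
      have h3' : (m = i) ↔ (m' = i') :=
        ⟨fun h => (h3.mp h.symm).symm, fun h => (h3.mpr h.symm).symm⟩
      have h4' : (l = j) ↔ (l' = j') :=
        ⟨fun h => (h4.mp h.symm).symm, fun h => (h4.mpr h.symm).symm⟩
      have h5' : (m = j) ↔ (m' = j') :=
        ⟨fun h => (h5.mp h.symm).symm, fun h => (h5.mpr h.symm).symm⟩
      have h6' : (m = l) ↔ (m' = l') :=
        ⟨fun h => (h6.mp h.symm).symm, fun h => (h6.mpr h.symm).symm⟩
      have hside : ∀ a b : Fin 4,
          ![i, j, l, m] a = ![i, j, l, m] b ↔ ![i', j', l', m'] a = ![i', j', l', m'] b := by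
        intro a b
        fin_cases a <;> fin_cases b <;>
          simp only [Matrix.cons_val_zero, Matrix.cons_val_one, Matrix.head_cons,
            Matrix.cons_val_two, Matrix.tail_cons, Matrix.cons_val_three] <;>
          (first
            | exact Iff.rfl
            | exact h1
            | exact h1'
            | exact h2
            | exact h2'
            | exact h3
            | exact h3'
            | exact h4
            | exact h4'
            | exact h5
            | exact h5'
            | exact h6
            | exact h6')
      have h := hsym 4 le_rfl ![i, j, l, m] ![i', j', l', m'] hside
      have e1 : ∀ ω, X i ω * X j ω * X l ω * X m ω = ∏ a, X (![i, j, l, m] a) ω :=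
        fun ω => by rw [Fin.prod_univ_four]; simp
      have e2 : ∀ ω, X i' ω * X j' ω * X l' ω * X m' ω = ∏ a, X (![i', j', l', m'] a) ω :=
        fun ω => by rw [Fin.prod_univ_four]; simp
      rw [hcdef, hcdef, hIC _ _ e1, hIC _ _ e2]
      exact h
    -- commutativity helper
    have hcg : ∀ i j l m i' j' l' m' : Fin k,
        (∀ ω, X i ω * X j ω * X l ω * X m ω = X i' ω * X j' ω * X l' ω * X m' ω) →
        c i j l m = c i' j' l' m' := by
      intro i j l m i' j' l' m' h
      rw [hcdef, hcdef]; exact hIC _ _ h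
    -- the five pattern constants
    set A : ℝ := c r0 r1 r2 r3 with hAdef
    set q22 : ℝ := c r0 r0 r1 r1 with h22def
    set q31 : ℝ := c r0 r0 r0 r1 with h31def
    set q211 : ℝ := c r0 r0 r1 r2 with h211def
    have hAb : |A| ≤ M4 := by rw [hAdef]; exact hcb r0 r1 r2 r3
    have h22b : |q22| ≤ M4 := by rw [h22def]; exact hcb r0 r0 r1 r1
    have h31b : |q31| ≤ M4 := by rw [h31def]; exact hcb r0 r0 r0 r1
    have h211b : |q211| ≤ M4 := by rw [h211def]; exact hcb r0 r0 r1 r2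
    -- class lemmas
    have h4c : ∀ i : Fin k, c i i i i = M4 := by
      intro i
      rw [hcdef, hIC _ (fun ω => X i ω ^ 4) (fun ω => by ring)]
      exact hX4eq i
    have h31c : ∀ i j : Fin k, i ≠ j → c i i i j = q31 := by
      intro i j hij
      rw [h31def]
      exact hpat i i i j r0 r0 r0 r1 (by simp) (by simp) (iff_of_false hij hr01)
        (by simp) (iff_of_false hij hr01) (iff_of_false hij hr01)
    have h22c : ∀ i j : Fin k, i ≠ j → c i i j j = q22 := by
      intro i j hij
      rw [h22def]
      exact hpat i i j j r0 r0 r1 r1 (by simp) (iff_of_false hij hr01)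
        (iff_of_false hij hr01) (iff_of_false hij hr01) (iff_of_false hij hr01) (by simp)
    have h211c : ∀ i j l : Fin k, i ≠ j → i ≠ l → j ≠ l → c i i j l = q211 := by
      intro i j l hij hil hjl
      rw [h211def]
      exact hpat i i j l r0 r0 r1 r2 (by simp) (iff_of_false hij hr01)
        (iff_of_false hil hr02) (iff_of_false hij hr01) (iff_of_false hil hr02)
        (iff_of_false hjl hr12)
    have hAc : ∀ i j l m : Fin k, i ≠ j → i ≠ l → i ≠ m → j ≠ l → j ≠ m → l ≠ m →
        c i j l m = A := by
      intro i j l m hij hil him hjl hjm hlm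
      rw [hAdef]
      exact hpat i j l m r0 r1 r2 r3 (iff_of_false hij hr01) (iff_of_false hil hr02)
        (iff_of_false him hr03) (iff_of_false hjl hr12) (iff_of_false hjm hr13)
        (iff_of_false hlm hr23)
    -- indicator function
    obtain ⟨e, he⟩ : ∃ e : Fin k → Fin k → ℝ,
        ∀ p q, e p q = if p = q then 1 else 0 := ⟨_, fun _ _ => rfl⟩
    have heq : ∀ p, e p p = (1 : ℝ) := fun p => by rw [he]; simp
    have hne : ∀ p q, p ≠ q → e p q = 0 := fun p q h => by rw [he]; simp [h]
    have hcol : ∀ (g : Fin k → ℝ) (p : Fin k), (∑ m, g m * e p m) = g p := by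
      intro g p
      rw [Finset.sum_congr rfl fun m (_ : m ∈ univ) => by rw [he p m]]
      simp [mul_ite]
    -- abbreviations for the coefficients
    obtain ⟨B, hB⟩ : ∃ x : ℝ, x = q211 - A := ⟨_, rfl⟩
    obtain ⟨Cc, hCc⟩ : ∃ x : ℝ, x = q31 - 3 * q211 + 2 * A := ⟨_, rfl⟩
    obtain ⟨D, hD⟩ : ∃ x : ℝ, x = q22 - 2 * q211 + A := ⟨_, rfl⟩
    obtain ⟨F, hF⟩ : ∃ x : ℝ, x = M4 - 4 * q31 - 3 * q22 + 12 * q211 - 6 * A := ⟨_, rfl⟩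
    -- the key pointwise formula
    have key : ∀ i j l m : Fin k, c i j l m
        = A + B * (e i j + e i l + e i m + e j l + e j m + e l m)
        + Cc * (e i j * e i l + e i j * e i m + e i l * e i m + e j l * e j m)
        + D * (e i j * e l m + e i l * e j m + e i m * e j l)
        + F * (e i j * e i l * e i m) := by
      intro i j l m
      rcases eq_or_ne i j with rfl | hij
      · rcases eq_or_ne i l with rfl | hil
        · rcases eq_or_ne i m with rfl | him
          · rw [h4c i]
            simp only [heq, hB, hCc, hD, hF]; ring
          · rw [h31c i m him]
            simp only [heq, hne i m him, hB, hCc, hD, hF]; ring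
        · rcases eq_or_ne i m with rfl | him
          · rw [hcg i i l i i i i l (fun ω => by ring), h31c i l hil]
            simp only [heq, hne i l hil, hne l i (Ne.symm hil), hB, hCc, hD, hF]; ring
          · rcases eq_or_ne l m with rfl | hlm
            · rw [h22c i l hil]
              simp only [heq, hne i l hil, hne l i (Ne.symm hil), hne i l hil, hB, hCc, hD,
                hF]
              ring
            · rw [h211c i l m hil him hlm]
              simp only [heq, hne i l hil, hne i m him, hne l m hlm, hB, hCc, hD, hF]; ring
      · rcases eq_or_ne i l with rfl | hil
        · rcases eq_or_ne i m with rfl | him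
          · rw [hcg i j i i i i i j (fun ω => by ring), h31c i j hij]
            simp only [heq, hne i j hij, hne j i (Ne.symm hij), hB, hCc, hD, hF]; ring
          · rcases eq_or_ne j m with rfl | hjm
            · rw [hcg i j i j i i j j (fun ω => by ring), h22c i j hij]
              simp only [heq, hne i j hij, hne j i (Ne.symm hij), hB, hCc, hD, hF]; ring
            · rw [hcg i j i m i i j m (fun ω => by ring), h211c i j m hij him hjm]
              simp only [heq, hne i j hij, hne j i (Ne.symm hij), hne i m him,
                hne j m hjm, hB, hCc, hD, hF]
              ring
        · rcases eq_or_ne i m with rfl | him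
          · rcases eq_or_ne j l with rfl | hjl
            · rw [hcg i j j i i i j j (fun ω => by ring), h22c i j hij]
              simp only [heq, hne i j hij, hne j i (Ne.symm hij), hB, hCc, hD, hF]; ring
            · rw [hcg i j l i i i j l (fun ω => by ring), h211c i j l hij hil hjl]
              simp only [heq, hne i j hij, hne j i (Ne.symm hij), hne i l hil,
                hne l i (Ne.symm hil), hne j l hjl, hB, hCc, hD, hF]
              ring
          · rcases eq_or_ne j l with rfl | hjl
            · rcases eq_or_ne j m with rfl | hjm
              · rw [hcg i j j j j j j i (fun ω => by ring), h31c j i (Ne.symm hij)]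
                simp only [heq, hne i j hij, hne j i (Ne.symm hij), hB, hCc, hD, hF]; ring
              · rw [hcg i j j m j j i m (fun ω => by ring),
                  h211c j i m (Ne.symm hij) hjm him]
                simp only [heq, hne i j hij, hne j i (Ne.symm hij), hne i m him,
                  hne j m hjm, hB, hCc, hD, hF]
                ring
            · rcases eq_or_ne j m with rfl | hjm
              · rw [hcg i j l j j j i l (fun ω => by ring),
                  h211c j i l (Ne.symm hij) hjl hil]
                simp only [heq, hne i j hij, hne j i (Ne.symm hij), hne i l hil,
                  hne l i (Ne.symm hil), hne j l hjl, hne l j (Ne.symm hjl), hB, hCc, hD,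
                  hF]
                ring
              · rcases eq_or_ne l m with rfl | hlm
                · rw [hcg i j l l l l i j (fun ω => by ring),
                    h211c l i j (Ne.symm hil) (Ne.symm hjl) hij]
                  simp only [heq, hne i j hij, hne i l hil, hne j l hjl,
                    hne l i (Ne.symm hil), hne l j (Ne.symm hjl), hB, hCc, hD, hF]
                  ring
                · rw [hAc i j l m hij hil him hjl hjm hlm]
                  simp only [hne i j hij, hne i l hil, hne i m him, hne j l hjl,
                    hne j m hjm, hne l m hlm, hB, hCc, hD, hF]
                  ring
    -- power sums
    set S3 : ℝ := ∑ i, δ i ^ 3 with hS3def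
    set S4 : ℝ := ∑ i, δ i ^ 4 with hS4def
    have hS2' : (∑ x, δ x * δ x) = S2 := by
      rw [hS2def]; exact Finset.sum_congr rfl fun x _ => by ring
    have hS3' : (∑ x, δ x * δ x * δ x) = S3 := by
      rw [hS3def]; exact Finset.sum_congr rfl fun x _ => by ring
    have hS4' : (∑ x, δ x * δ x * (δ x * δ x)) = S4 := by
      rw [hS4def]; exact Finset.sum_congr rfl fun x _ => by ring
    -- summing out m
    have hm : ∀ i j l : Fin k, (∑ m, (δ i * δ j * δ l * δ m) * c i j l m)
        = δ i * δ j * δ l * (B * (δ i + δ j + δ l)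
          + Cc * (e i j * δ i + e i l * δ i + e j l * δ j)
          + D * (e i j * δ l + e i l * δ j + e j l * δ i)
          + F * (e i j * e i l * δ i)) := by
      intro i j l
      have h1 : ∀ m, (δ i * δ j * δ l * δ m) * c i j l m
          = (δ i * δ j * δ l * (A + B * (e i j + e i l + e j l) + Cc * (e i j * e i l))) * δ m
          + (δ i * δ j * δ l * (B + Cc * (e i j + e i l) + D * e j l + F * (e i j * e i l)))
            * (δ m * e i m)
          + (δ i * δ j * δ l * (B + Cc * e j l + D * e i l)) * (δ m * e j m)
          + (δ i * δ j * δ l * (B + D * e i j)) * (δ m * e l m) := by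
        intro m; rw [key i j l m]; ring
      rw [Finset.sum_congr rfl fun m (_ : m ∈ univ) => h1 m,
        Finset.sum_add_distrib, Finset.sum_add_distrib, Finset.sum_add_distrib,
        ← Finset.mul_sum, ← Finset.mul_sum, ← Finset.mul_sum, ← Finset.mul_sum,
        hδ, hcol δ i, hcol δ j, hcol δ l, mul_zero]
      ring
    -- summing out l
    have hl : ∀ i j : Fin k, (∑ l, δ i * δ j * δ l * (B * (δ i + δ j + δ l)
          + Cc * (e i j * δ i + e i l * δ i + e j l * δ j)
          + D * (e i j * δ l + e i l * δ j + e j l * δ i)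
          + F * (e i j * e i l * δ i)))
        = δ i * δ j * (S2 * (B + D * e i j)
          + δ i * (Cc * δ i + D * δ j + F * (e i j * δ i))
          + δ j * (Cc * δ j + D * δ i)) := by
      intro i j
      have h1 : ∀ l, δ i * δ j * δ l * (B * (δ i + δ j + δ l)
            + Cc * (e i j * δ i + e i l * δ i + e j l * δ j)
            + D * (e i j * δ l + e i l * δ j + e j l * δ i)
            + F * (e i j * e i l * δ i))
          = (δ i * δ j * (B * (δ i + δ j) + Cc * (e i j * δ i))) * δ l
          + (δ i * δ j * (B + D * e i j)) * (δ l * δ l)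
          + (δ i * δ j * (Cc * δ i + D * δ j + F * (e i j * δ i))) * (δ l * e i l)
          + (δ i * δ j * (Cc * δ j + D * δ i)) * (δ l * e j l) := by
        intro l; ring
      rw [Finset.sum_congr rfl fun l (_ : l ∈ univ) => h1 l,
        Finset.sum_add_distrib, Finset.sum_add_distrib, Finset.sum_add_distrib,
        ← Finset.mul_sum, ← Finset.mul_sum, ← Finset.mul_sum, ← Finset.mul_sum,
        hδ, hS2', hcol δ i, hcol δ j, mul_zero]
      ring
    -- summing out j
    have hj : ∀ i : Fin k, (∑ j, δ i * δ j * (S2 * (B + D * e i j)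
          + δ i * (Cc * δ i + D * δ j + F * (e i j * δ i))
          + δ j * (Cc * δ j + D * δ i)))
        = Cc * S3 * δ i + 3 * D * S2 * (δ i * δ i) + F * (δ i * δ i * (δ i * δ i)) := by
      intro i
      have h1 : ∀ j, δ i * δ j * (S2 * (B + D * e i j)
            + δ i * (Cc * δ i + D * δ j + F * (e i j * δ i))
            + δ j * (Cc * δ j + D * δ i))
          = (δ i * (S2 * B) + Cc * (δ i * δ i * δ i)) * δ j
          + (2 * D * (δ i * δ i)) * (δ j * δ j)
          + (Cc * δ i) * (δ j * δ j * δ j)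
          + ((S2 * D + F * (δ i * δ i)) * δ i) * (δ j * e i j) := by
        intro j; ring
      rw [Finset.sum_congr rfl fun j (_ : j ∈ univ) => h1 j,
        Finset.sum_add_distrib, Finset.sum_add_distrib, Finset.sum_add_distrib,
        ← Finset.mul_sum, ← Finset.mul_sum, ← Finset.mul_sum, ← Finset.mul_sum,
        hδ, hS2', hS3', hcol δ i, mul_zero]
      ring
    -- summing out i
    have hi : (∑ i, (Cc * S3 * δ i + 3 * D * S2 * (δ i * δ i)
          + F * (δ i * δ i * (δ i * δ i))))
        = 3 * D * S2 * S2 + F * S4 := by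
      rw [Finset.sum_add_distrib, Finset.sum_add_distrib,
        ← Finset.mul_sum, ← Finset.mul_sum, ← Finset.mul_sum,
        hδ, hS2', hS4', mul_zero]
      ring
    have htot : (∑ i, ∑ j, ∑ l, ∑ m, (δ i * δ j * δ l * δ m) * c i j l m)
        = 3 * D * S2 * S2 + F * S4 := by
      rw [Finset.sum_congr rfl fun i (_ : i ∈ univ) => Finset.sum_congr rfl
          fun j (_ : j ∈ univ) => Finset.sum_congr rfl fun l (_ : l ∈ univ) => hm i j l,
        Finset.sum_congr rfl fun i (_ : i ∈ univ) => Finset.sum_congr rfl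
          fun j (_ : j ∈ univ) => hl i j,
        Finset.sum_congr rfl fun i (_ : i ∈ univ) => hj i, hi]
    rw [htot]
    clear hm hl hj hi htot key hcol heq hne hpat hcg h4c h31c h22c h211c hAc hpt
    clear hint4 hintm hintl hintj hinti hZ hcb hcsq cs hX4eq hIC hsym hXmeas hX4
    -- final estimates
    have hS4nn : 0 ≤ S4 := by
      rw [hS4def]; exact Finset.sum_nonneg fun i _ => by positivity
    have hS4le : S4 ≤ S2 ^ 2 := by
      rw [hS4def, hS2def]
      calc (∑ i, δ i ^ 4) = ∑ i, (δ i ^ 2) ^ 2 :=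
            Finset.sum_congr rfl fun i _ => by ring
        _ ≤ (∑ i, δ i ^ 2) ^ 2 :=
            Finset.sum_sq_le_sq_sum_of_nonneg fun i _ => sq_nonneg _
    have hW : 3 * D * S2 * S2 + F * S4
        = S4 * M4 + (3 * S2 ^ 2 - 3 * S4) * q22 + (-(4 * S4)) * q31
          + (12 * S4 - 6 * S2 ^ 2) * q211 + (3 * S2 ^ 2 - 6 * S4) * A := by
      rw [hD, hF]; ring
    have hmul : ∀ u v w : ℝ, |u| ≤ w → |v| ≤ M4 → u * v ≤ w * M4 := by
      intro u v w h1 h2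
      calc u * v ≤ |u * v| := le_abs_self _
        _ = |u| * |v| := abs_mul u v
        _ ≤ w * M4 := mul_le_mul h1 h2 (abs_nonneg _) ((abs_nonneg u).trans h1)
    have t1 : S4 * M4 ≤ S2 ^ 2 * M4 := mul_le_mul_of_nonneg_right hS4le hM4nn
    have t2 : (3 * S2 ^ 2 - 3 * S4) * q22 ≤ (3 * S2 ^ 2) * M4 :=
      hmul _ _ _ (abs_le.2 ⟨by linarith [hS4nn, hS4le], by linarith [hS4nn, hS4le]⟩) h22b
    have t3 : (-(4 * S4)) * q31 ≤ (4 * S2 ^ 2) * M4 :=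
      hmul _ _ _ (abs_le.2 ⟨by linarith [hS4nn, hS4le], by linarith [hS4nn, hS4le]⟩) h31b
    have t4 : (12 * S4 - 6 * S2 ^ 2) * q211 ≤ (6 * S2 ^ 2) * M4 :=
      hmul _ _ _ (abs_le.2 ⟨by linarith [hS4nn, hS4le], by linarith [hS4nn, hS4le]⟩) h211b
    have t5 : (3 * S2 ^ 2 - 6 * S4) * A ≤ (3 * S2 ^ 2) * M4 :=
      hmul _ _ _ (abs_le.2 ⟨by linarith [hS4nn, hS4le], by linarith [hS4nn, hS4le]⟩) hAb
    have hM4S2 : 0 ≤ M4 * S2 ^ 2 := mul_nonneg hM4nn (sq_nonneg _)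
    rw [hW]
    linarith [t1, t2, t3, t4, t5, hM4S2]
end

section
/- Let k be even, let δ ∈ ℝ^{k×k} be a matrix all of whose row sums and column sums are zero, and let X = (X₁,…,X_k) and Y = (Y₁,…,Y_k) be independent, each uniformly distributed over binary vectors in {0,1}^k of Hamming weight exactly k/2. Set Z = Σ_{(i,j)} δ_{ij} X_i Y_j. Then E[Z] = 0 and Var(Z) = E[Z²] = (E[X₁²] − E[X₁X₂])·(E[Y₁²] − E[Y₁Y₂])·‖δ‖_F² = (1/4)·E[(X₁−X₂)²]·E[(Y₁−Y₂)²]·‖δ‖_F², and consequently (1/16)·‖δ‖_F² ≤ Var(Z) ≤ (1/4)·‖δ‖_F². -/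
open Finset

/-- The family of subsets of `[k]` of cardinality `k/2` (the supports of the binary
vectors of Hamming weight `k/2`). -/
def halfSubsets (k : ℕ) : Finset (Finset (Fin k)) :=
  Finset.powersetCard (k / 2) (Finset.univ : Finset (Fin k))

/-- Expectation of a function of one uniformly random weight-`k/2` binary vector
(identified with its support). -/
noncomputable def Esub {k : ℕ} (f : Finset (Fin k) → ℝ) : ℝ :=
  (∑ S ∈ halfSubsets k, f S) / ((halfSubsets k).card : ℝ)

/-- Expectation of a function of two independent uniformly random weight-`k/2`
binary vectors (identified with their supports). -/
noncomputable def Epair {k : ℕ} (f : Finset (Fin k) → Finset (Fin k) → ℝ) : ℝ :=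
  (∑ S₁ ∈ halfSubsets k, ∑ S₂ ∈ halfSubsets k, f S₁ S₂)
    / ((halfSubsets k).card : ℝ) ^ 2

/-- The coordinate `X_i` of the random binary vector with support `S`. -/
noncomputable def indX {k : ℕ} (i : Fin k) (S : Finset (Fin k)) : ℝ :=
  if i ∈ S then 1 else 0

/-!
Among the `N` subsets `S` of size `m` of an `n`-set, the number containing both `i` and `j`
is invariant under permutations of the ground set, so it is some `a` when `i = j` and some `b`
when `i ≠ j`. Expanding `(∑ j ∈ S, c j) ^ 2` and summing over `S` gives
`b (∑ c) ^ 2 + (a - b) ∑ c ^ 2`, which is `(a - b) ∑ c ^ 2` when `∑ c = 0`. Applying this in `Y`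
(row sums vanish) and then in `X` (column sums vanish) gives `E[Z²] = ((a - b) / N)² ‖δ‖_F²`.
Taking `c = 1` (double counting) yields `a n = N m` and `b n² + (a - b) n = N m²`, so for
`m = n / 2` we get `E[X₁²] = 1/2`, `E[X₁X₂] = (n - 2) / (4 (n - 1))`.
-/

section DoubleCounting

variable {α β M : Type*} [AddCommMonoid M] [Fintype β] [DecidableEq β]

theorem Finset.sum_sum_eq_sum_card_filter_smul (𝒜 : Finset α) (g : α → Finset β) (c : β → M) :
    ∑ a ∈ 𝒜, ∑ x ∈ g a, c x = ∑ x, #{a ∈ 𝒜 | x ∈ g a} • c x := by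
  rw [sum_comm' (t' := univ) (s' := fun x => {a ∈ 𝒜 | x ∈ g a}) (by simp)]
  simp only [sum_const]

end DoubleCounting

section SetFamily

variable {ι : Type*} [Fintype ι] [DecidableEq ι] (𝒜 : Finset (Finset ι)) (c : ι → ℝ)

theorem sum_sum_mem_eq : ∑ S ∈ 𝒜, ∑ j ∈ S, c j = ∑ j, #{S ∈ 𝒜 | j ∈ S} * c j := by
  simpa only [nsmul_eq_mul, id] using sum_sum_eq_sum_card_filter_smul 𝒜 id c

theorem sum_sq_sum_mem_eq :
    ∑ S ∈ 𝒜, (∑ j ∈ S, c j) ^ 2 = ∑ i, ∑ j, #{S ∈ 𝒜 | i ∈ S ∧ j ∈ S} * (c i * c j) := by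
  calc ∑ S ∈ 𝒜, (∑ j ∈ S, c j) ^ 2 = ∑ S ∈ 𝒜, ∑ p ∈ S ×ˢ S, c p.1 * c p.2 := by
        simp only [sq, sum_mul_sum, sum_product]
    _ = ∑ p : ι × ι, #{S ∈ 𝒜 | p ∈ S ×ˢ S} • (c p.1 * c p.2) :=
        sum_sum_eq_sum_card_filter_smul 𝒜 (fun S => S ×ˢ S) _
    _ = _ := by simp only [← univ_product_univ, sum_product, mem_product, nsmul_eq_mul]

variable {𝒜 c} {a b : ℝ}

theorem sum_sum_mem_of_card_filter_mem (h : ∀ j, (#{S ∈ 𝒜 | j ∈ S} : ℝ) = a) :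
    ∑ S ∈ 𝒜, ∑ j ∈ S, c j = a * ∑ j, c j := by
  simp only [sum_sum_mem_eq, h, mul_sum]

theorem sum_sq_sum_mem_of_card_filter_mem_and_mem
    (h : ∀ i j, (#{S ∈ 𝒜 | i ∈ S ∧ j ∈ S} : ℝ) = if i = j then a else b) :
    ∑ S ∈ 𝒜, (∑ j ∈ S, c j) ^ 2 = b * (∑ j, c j) ^ 2 + (a - b) * ∑ j, c j ^ 2 := by
  calc ∑ S ∈ 𝒜, (∑ j ∈ S, c j) ^ 2
      = ∑ i, ∑ j, (b * (c i * c j) + if i = j then (a - b) * (c i * c j) else 0) := by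
        rw [sum_sq_sum_mem_eq]
        refine sum_congr rfl fun i _ => sum_congr rfl fun j _ => ?_
        rw [h]
        split_ifs <;> ring
    _ = _ := by
        simp only [sum_add_distrib, sum_ite_eq, mem_univ, if_true, ← mul_sum, ← sum_mul, sq]

end SetFamily

section Bilinear

variable {ι : Type*} [Fintype ι] [DecidableEq ι] {𝒜 : Finset (Finset ι)} {a b : ℝ}
  {δ : ι → ι → ℝ}

theorem sum_sq_sum_mem_of_sum_eq_zero {c : ι → ℝ}
    (h : ∀ i j, (#{S ∈ 𝒜 | i ∈ S ∧ j ∈ S} : ℝ) = if i = j then a else b) (hc : ∑ j, c j = 0) :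
    ∑ S ∈ 𝒜, (∑ j ∈ S, c j) ^ 2 = (a - b) * ∑ j, c j ^ 2 := by
  rw [sum_sq_sum_mem_of_card_filter_mem_and_mem h, hc]
  ring

theorem sum_sum_bilinear_eq_zero (h : ∀ j, (#{S ∈ 𝒜 | j ∈ S} : ℝ) = a)
    (hrow : ∀ i, ∑ j, δ i j = 0) :
    ∑ S₁ ∈ 𝒜, ∑ S₂ ∈ 𝒜, ∑ i ∈ S₁, ∑ j ∈ S₂, δ i j = 0 := by
  refine sum_eq_zero fun S₁ _ => ?_
  simp_rw [sum_comm (s := S₁) (f := δ)]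
  rw [sum_sum_mem_of_card_filter_mem h, sum_comm, sum_eq_zero fun i _ => hrow i, mul_zero]

theorem sum_sum_sq_bilinear
    (h : ∀ i j, (#{S ∈ 𝒜 | i ∈ S ∧ j ∈ S} : ℝ) = if i = j then a else b)
    (hrow : ∀ i, ∑ j, δ i j = 0) (hcol : ∀ j, ∑ i, δ i j = 0) :
    ∑ S₁ ∈ 𝒜, ∑ S₂ ∈ 𝒜, (∑ i ∈ S₁, ∑ j ∈ S₂, δ i j) ^ 2
      = (a - b) ^ 2 * ∑ i, ∑ j, δ i j ^ 2 := by
  have hinner (S₁ : Finset ι) : ∑ j, ∑ i ∈ S₁, δ i j = 0 :=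
    sum_comm.trans (sum_eq_zero fun i _ => hrow i)
  calc ∑ S₁ ∈ 𝒜, ∑ S₂ ∈ 𝒜, (∑ i ∈ S₁, ∑ j ∈ S₂, δ i j) ^ 2
      = ∑ S₁ ∈ 𝒜, (a - b) * ∑ j, (∑ i ∈ S₁, δ i j) ^ 2 := sum_congr rfl fun S₁ _ => by
        simp_rw [sum_comm (s := S₁) (f := δ)]
        exact sum_sq_sum_mem_of_sum_eq_zero h (hinner S₁)
    _ = (a - b) * ∑ j, ∑ S₁ ∈ 𝒜, (∑ i ∈ S₁, δ i j) ^ 2 := by rw [← mul_sum, sum_comm]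
    _ = (a - b) * ∑ j, (a - b) * ∑ i, δ i j ^ 2 := by
        simp_rw [sum_sq_sum_mem_of_sum_eq_zero h (hcol _)]
    _ = (a - b) ^ 2 * ∑ i, ∑ j, δ i j ^ 2 := by
        rw [← mul_sum, sum_comm (s := univ)]
        ring

end Bilinear

section UniformFamily

variable {ι : Type*} [Fintype ι] [DecidableEq ι] (m : ℕ)

theorem card_filter_subset_powersetCard_congr {s t : Finset ι} (h : #s = #t) :
    #{S ∈ powersetCard m univ | s ⊆ S} = #{S ∈ powersetCard m univ | t ⊆ S} := by
  obtain ⟨σ, rfl⟩ := Equiv.Perm.exists_map_finset_eq s t h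
  refine card_nbij' (·.map σ.toEmbedding) (·.map σ.symm.toEmbedding) ?_ ?_ ?_ ?_ <;>
    intro S hS <;> simp_all [map_map, subset_map_symm]

theorem card_filter_mem_and_mem_powersetCard_congr {i j i' j' : ι} (h : i = j ↔ i' = j') :
    #{S ∈ powersetCard m univ | i ∈ S ∧ j ∈ S} = #{S ∈ powersetCard m univ | i' ∈ S ∧ j' ∈ S} := by
  have hpair (x y : ι) : {S ∈ powersetCard m (univ : Finset ι) | x ∈ S ∧ y ∈ S}
      = {S ∈ powersetCard m (univ : Finset ι) | {x, y} ⊆ S} := by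
    simp only [insert_subset_iff, singleton_subset_iff]
  rw [hpair, hpair]
  apply card_filter_subset_powersetCard_congr
  by_cases hij : i = j
  · simp [hij, h.mp hij]
  · simp [card_pair hij, card_pair (mt h.mpr hij)]

omit [DecidableEq ι] in
theorem sum_powersetCard_univ_card (f : ℕ → ℝ) :
    ∑ S ∈ powersetCard m (univ : Finset ι), f #S = (Fintype.card ι).choose m * f m := by
  rw [sum_congr rfl fun S hS => by rw [(mem_powersetCard.1 hS).2], sum_const,
    card_powersetCard, card_univ, nsmul_eq_mul]

theorem card_filter_mem_powersetCard_mul_card (i : ι) :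
    (#{S ∈ powersetCard m univ | i ∈ S} : ℝ) * Fintype.card ι
      = (Fintype.card ι).choose m * m := by
  have hdeg (j : ι) :
      (#{S ∈ powersetCard m univ | j ∈ S} : ℝ) = #{S ∈ powersetCard m univ | i ∈ S} := by
    simpa only [and_self] using congrArg (Nat.cast (R := ℝ))
      (card_filter_mem_and_mem_powersetCard_congr m (iff_of_true (rfl : j = j) (rfl : i = i)))
  have h := sum_sum_mem_of_card_filter_mem hdeg (c := fun _ => (1 : ℝ))
  simp only [sum_const, card_univ, nsmul_eq_mul, mul_one] at h
  rw [← h, sum_powersetCard_univ_card m Nat.cast]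

theorem card_filter_mem_and_mem_powersetCard (i j : ι) :
    (#{S ∈ powersetCard m univ | i ∈ S ∧ j ∈ S} : ℝ)
      = if i = j then ((Fintype.card ι).choose m : ℝ) * m / Fintype.card ι
        else ((Fintype.card ι).choose m : ℝ) * m * (m - 1)
          / (Fintype.card ι * (Fintype.card ι - 1)) := by
  have hfirst := card_filter_mem_powersetCard_mul_card m i
  have : Nonempty ι := ⟨i⟩
  have hn : (Fintype.card ι : ℝ) ≠ 0 := Nat.cast_ne_zero.2 Fintype.card_ne_zero
  split_ifs with hij
  · subst hij
    simp only [← hfirst, and_self, mul_div_cancel_right₀ _ hn]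
  · have hpair (i' j' : ι) : (#{S ∈ powersetCard m univ | i' ∈ S ∧ j' ∈ S} : ℝ)
        = if i' = j' then (#{S ∈ powersetCard m univ | i ∈ S} : ℝ)
          else #{S ∈ powersetCard m univ | i ∈ S ∧ j ∈ S} := by
      split_ifs with h'
      · simpa only [and_self] using
          congrArg _ (card_filter_mem_and_mem_powersetCard_congr m (iff_of_true h' (rfl : i = i)))
      · exact congrArg _ (card_filter_mem_and_mem_powersetCard_congr m (iff_of_false h' hij))
    have hsecond := sum_sq_sum_mem_of_card_filter_mem_and_mem hpair (c := fun _ => (1 : ℝ))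
    simp only [sum_const, card_univ, nsmul_eq_mul, mul_one, one_pow] at hsecond
    rw [sum_powersetCard_univ_card m (fun n => (n : ℝ) ^ 2)] at hsecond
    have hn1 : (Fintype.card ι : ℝ) - 1 ≠ 0 := by
      have : (1 : ℝ) < Fintype.card ι := by exact_mod_cast Fintype.one_lt_card_iff.2 ⟨i, j, hij⟩
      linarith
    field_simp
    linear_combination -hfirst - hsecond

end UniformFamily

section HalfSubsets

variable {k : ℕ}

theorem card_halfSubsets_ne_zero : (#(halfSubsets k) : ℝ) ≠ 0 := by
  rw [halfSubsets, Nat.cast_ne_zero, card_powersetCard, card_univ, Fintype.card_fin]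
  exact (Nat.choose_pos (Nat.div_le_self k 2)).ne'

theorem card_filter_mem_and_mem_halfSubsets (hk : k % 2 = 0) (i j : Fin k) :
    (#{S ∈ halfSubsets k | i ∈ S ∧ j ∈ S} : ℝ)
      = #(halfSubsets k) * if i = j then (1 / 2 : ℝ) else ((k : ℝ) - 2) / (4 * (k - 1)) := by
  have hhalf : ((k / 2 : ℕ) : ℝ) = k / 2 := by
    rw [Nat.cast_div (Nat.dvd_of_mod_eq_zero hk) two_ne_zero, Nat.cast_ofNat]
  have hk0 : (k : ℝ) ≠ 0 := Nat.cast_ne_zero.2 (Fin.pos i).ne'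
  rw [halfSubsets, card_filter_mem_and_mem_powersetCard, card_powersetCard, card_univ,
    Fintype.card_fin, hhalf]
  split_ifs with hij
  · field_simp
  · have hk1 : (k : ℝ) - 1 ≠ 0 := by
      have : 1 < k := Fintype.one_lt_card_iff.2 ⟨i, j, hij⟩ |>.trans_eq (Fintype.card_fin k)
      rw [sub_ne_zero, Nat.cast_ne_one]
      omega
    field_simp
    ring

theorem Esub_indX_mul_indX (hk : k % 2 = 0) (i j : Fin k) :
    Esub (fun S => indX i S * indX j S)
      = if i = j then (1 / 2 : ℝ) else ((k : ℝ) - 2) / (4 * (k - 1)) := by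
  have hprod (S : Finset (Fin k)) : indX i S * indX j S = if i ∈ S ∧ j ∈ S then 1 else 0 := by
    simp only [indX, ite_zero_mul_ite_zero, one_mul]
  rw [Esub, sum_congr rfl fun S _ => hprod S, sum_boole, card_filter_mem_and_mem_halfSubsets hk,
    mul_div_cancel_left₀ _ card_halfSubsets_ne_zero]

theorem Esub_indX_sub_indX_sq (i j : Fin k) :
    Esub (fun S => (indX i S - indX j S) ^ 2)
      = Esub (fun S => indX i S * indX i S) - 2 * Esub (fun S => indX i S * indX j S)
        + Esub (fun S => indX j S * indX j S) := by
  simp only [Esub, ← mul_div_assoc, ← sub_div, ← add_div, mul_sum, ← sum_sub_distrib,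
    ← sum_add_distrib]
  congr 1
  exact sum_congr rfl fun S _ => by ring

variable {δ : Fin k → Fin k → ℝ}

theorem Epair_bilinear_eq_zero (hk : k % 2 = 0) (hrow : ∀ i, ∑ j, δ i j = 0) :
    Epair (fun S₁ S₂ => ∑ i ∈ S₁, ∑ j ∈ S₂, δ i j) = 0 := by
  rw [Epair, sum_sum_bilinear_eq_zero (fun j => by
    simpa only [and_self] using card_filter_mem_and_mem_halfSubsets hk j j) hrow, zero_div]

theorem Epair_bilinear_sq (hk : k % 2 = 0) (hrow : ∀ i, ∑ j, δ i j = 0)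
    (hcol : ∀ j, ∑ i, δ i j = 0) :
    Epair (fun S₁ S₂ => (∑ i ∈ S₁, ∑ j ∈ S₂, δ i j) ^ 2)
      = (1 / 2 - ((k : ℝ) - 2) / (4 * (k - 1))) ^ 2 * ∑ i, ∑ j, δ i j ^ 2 := by
  rw [Epair, sum_sum_sq_bilinear (fun i j => (card_filter_mem_and_mem_halfSubsets hk i j).trans
    (mul_ite _ _ _ _)) hrow hcol, ← mul_sub, mul_pow, mul_assoc,
    mul_div_cancel_left₀ _ (pow_ne_zero 2 card_halfSubsets_ne_zero)]

end HalfSubsets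

/-- Mean and variance of `Z = Σ_{i,j} δ_{ij} X_i Y_j` for a matrix `δ` with zero row
and column sums, where `X` and `Y` are independent uniform weight-`k/2` binary
vectors: `E[Z] = 0` and
`Var(Z) = E[Z²] = (E[X₁²]−E[X₁X₂])(E[Y₁²]−E[Y₁Y₂])‖δ‖_F²
       = (1/4)E[(X₁−X₂)²]E[(Y₁−Y₂)²]‖δ‖_F²`, whence
`‖δ‖_F²/16 ≤ Var(Z) ≤ ‖δ‖_F²/4`. -/
theorem joint_perturbation_mean_variance
    (k : ℕ) (hk2 : 2 ≤ k) (hke : k % 2 = 0)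
    (δ : Fin k → Fin k → ℝ)
    (hrow : ∀ i₀, ∑ j, δ i₀ j = 0) (hcol : ∀ j₀, ∑ i, δ i j₀ = 0) :
    Epair (fun S₁ S₂ => ∑ i ∈ S₁, ∑ j ∈ S₂, δ i j) = 0
    ∧ Epair (fun S₁ S₂ => (∑ i ∈ S₁, ∑ j ∈ S₂, δ i j) ^ 2)
        = (Esub (fun S => (indX (⟨0, by omega⟩ : Fin k) S) ^ 2)
              - Esub (fun S => indX (⟨0, by omega⟩ : Fin k) S * indX (⟨1, by omega⟩ : Fin k) S))
          * (Esub (fun S => (indX (⟨0, by omega⟩ : Fin k) S) ^ 2)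
              - Esub (fun S => indX (⟨0, by omega⟩ : Fin k) S * indX (⟨1, by omega⟩ : Fin k) S))
          * (∑ i, ∑ j, (δ i j) ^ 2)
    ∧ Epair (fun S₁ S₂ => (∑ i ∈ S₁, ∑ j ∈ S₂, δ i j) ^ 2)
        = (1 / 4)
          * Esub (fun S => (indX (⟨0, by omega⟩ : Fin k) S - indX (⟨1, by omega⟩ : Fin k) S) ^ 2)
          * Esub (fun S => (indX (⟨0, by omega⟩ : Fin k) S - indX (⟨1, by omega⟩ : Fin k) S) ^ 2)
          * (∑ i, ∑ j, (δ i j) ^ 2)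
    ∧ (1 / 16) * (∑ i, ∑ j, (δ i j) ^ 2)
        ≤ Epair (fun S₁ S₂ => (∑ i ∈ S₁, ∑ j ∈ S₂, δ i j) ^ 2)
    ∧ Epair (fun S₁ S₂ => (∑ i ∈ S₁, ∑ j ∈ S₂, δ i j) ^ 2)
        ≤ (1 / 4) * (∑ i, ∑ j, (δ i j) ^ 2) := by
  have hE := Esub_indX_mul_indX hke
  have h01 : (⟨0, by omega⟩ : Fin k) ≠ ⟨1, by omega⟩ := by simp
  have hsq : Esub (fun S => indX (⟨0, by omega⟩ : Fin k) S ^ 2) = 1 / 2 := by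
    simpa only [sq, if_pos] using hE ⟨0, by omega⟩ ⟨0, by omega⟩
  have hcross := hE ⟨0, by omega⟩ ⟨1, by omega⟩
  rw [if_neg h01] at hcross
  have hdiff : Esub (fun S => (indX (⟨0, by omega⟩ : Fin k) S - indX ⟨1, by omega⟩ S) ^ 2)
      = 2 * (1 / 2 - ((k : ℝ) - 2) / (4 * (k - 1))) := by
    rw [Esub_indX_sub_indX_sq, hE, hE, hE, if_pos rfl, if_pos rfl, if_neg h01]
    ring
  have hbounds : 1 / 16 ≤ (1 / 2 - ((k : ℝ) - 2) / (4 * (k - 1))) ^ 2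
      ∧ (1 / 2 - ((k : ℝ) - 2) / (4 * (k - 1))) ^ 2 ≤ 1 / 4 := by
    have hk : (2 : ℝ) ≤ k := by exact_mod_cast hk2
    have hq0 : 0 ≤ ((k : ℝ) - 2) / (4 * (k - 1)) := div_nonneg (by linarith) (by linarith)
    have hq1 : ((k : ℝ) - 2) / (4 * (k - 1)) ≤ 1 / 4 := by
      rw [div_le_iff₀ (by linarith)]
      linarith
    constructor <;> nlinarith
  have hF : 0 ≤ ∑ i, ∑ j, δ i j ^ 2 := by positivity
  rw [hsq, hcross, hdiff, Epair_bilinear_sq hke hrow hcol]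
  exact ⟨Epair_bilinear_eq_zero hke hrow, by ring, by ring,
    mul_le_mul_of_nonneg_right hbounds.1 hF, mul_le_mul_of_nonneg_right hbounds.2 hF⟩
end

section
/- Let p be a probability distribution on [k]×[k] with marginals p₁ and p₂, and suppose there exists a product distribution q = q₁⊗q₂ on [k]×[k] with TV(p, q) ≤ γ. Then TV(p, p₁⊗p₂) ≤ 3γ, i.e., p is within total variation distance 3γ of the product of its own marginals. -/
open Finset

/-- If a distribution `p` on `[k]×[k]` is within total variation distance `γ` of some
product distribution `q₁⊗q₂`, then it is within total variation distance `3γ` of the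
product of its own marginals. -/
theorem tv_close_to_product_of_marginals
    (k : ℕ) (γ : ℝ)
    (p : Fin k → Fin k → ℝ) (hp0 : ∀ i j, 0 ≤ p i j) (hp1 : ∑ i, ∑ j, p i j = 1)
    (q₁ q₂ : Fin k → ℝ)
    (hq₁0 : ∀ i, 0 ≤ q₁ i) (hq₁1 : ∑ i, q₁ i = 1)
    (hq₂0 : ∀ j, 0 ≤ q₂ j) (hq₂1 : ∑ j, q₂ j = 1)
    (h : (1 / 2) * ∑ i, ∑ j, |p i j - q₁ i * q₂ j| ≤ γ) :
    (1 / 2) * ∑ i, ∑ j, |p i j - (∑ j', p i j') * (∑ i', p i' j)| ≤ 3 * γ := by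
  set p₁ : Fin k → ℝ := fun i => ∑ j', p i j' with hp₁def
  set p₂ : Fin k → ℝ := fun j => ∑ i', p i' j with hp₂def
  set S : ℝ := ∑ i, ∑ j, |p i j - q₁ i * q₂ j| with hSdef
  have hp₁0 : ∀ i, 0 ≤ p₁ i := fun i => Finset.sum_nonneg fun j _ => hp0 i j
  have hp₁1 : ∑ i, p₁ i = 1 := hp1
  have hA : ∑ i, |q₁ i - p₁ i| ≤ S := by
    rw [hSdef]
    apply Finset.sum_le_sum
    intro i _
    have e : q₁ i - p₁ i = ∑ j, (q₁ i * q₂ j - p i j) := by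
      rw [Finset.sum_sub_distrib, ← Finset.mul_sum, hq₂1, mul_one, hp₁def]
    rw [e]
    refine (Finset.abs_sum_le_sum_abs _ _).trans_eq ?_
    exact Finset.sum_congr rfl fun j _ => abs_sub_comm _ _
  have hB : ∑ j, |q₂ j - p₂ j| ≤ S := by
    rw [hSdef, Finset.sum_comm]
    apply Finset.sum_le_sum
    intro j _
    have e : q₂ j - p₂ j = ∑ i, (q₁ i * q₂ j - p i j) := by
      rw [Finset.sum_sub_distrib, ← Finset.sum_mul, hq₁1, one_mul, hp₂def]
    rw [e]
    refine (Finset.abs_sum_le_sum_abs _ _).trans_eq ?_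
    exact Finset.sum_congr rfl fun i _ => abs_sub_comm _ _
  have hMid : ∑ i, ∑ j, |q₁ i * q₂ j - p₁ i * p₂ j| ≤
      (∑ i, |q₁ i - p₁ i|) + ∑ j, |q₂ j - p₂ j| := by
    have step : ∀ i ∈ Finset.univ (α := Fin k), ∀ j ∈ Finset.univ (α := Fin k),
        |q₁ i * q₂ j - p₁ i * p₂ j| ≤ |q₁ i - p₁ i| * q₂ j + p₁ i * |q₂ j - p₂ j| := by
      intro i _ j _
      have e : q₁ i * q₂ j - p₁ i * p₂ j
          = (q₁ i - p₁ i) * q₂ j + p₁ i * (q₂ j - p₂ j) := by ring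
      rw [e]
      refine (abs_add_le _ _).trans_eq ?_
      rw [abs_mul, abs_mul, abs_of_nonneg (hq₂0 j), abs_of_nonneg (hp₁0 i)]
    calc ∑ i, ∑ j, |q₁ i * q₂ j - p₁ i * p₂ j|
        ≤ ∑ i, ∑ j, (|q₁ i - p₁ i| * q₂ j + p₁ i * |q₂ j - p₂ j|) :=
          Finset.sum_le_sum fun i hi => Finset.sum_le_sum (step i hi)
      _ = (∑ i, |q₁ i - p₁ i|) + ∑ j, |q₂ j - p₂ j| := by
          simp only [Finset.sum_add_distrib, ← Finset.mul_sum, hq₂1, mul_one]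
          rw [← Finset.sum_mul, hp₁1, one_mul]
  have hTri : ∑ i, ∑ j, |p i j - p₁ i * p₂ j| ≤
      S + ∑ i, ∑ j, |q₁ i * q₂ j - p₁ i * p₂ j| := by
    rw [hSdef, ← Finset.sum_add_distrib]
    apply Finset.sum_le_sum
    intro i _
    rw [← Finset.sum_add_distrib]
    apply Finset.sum_le_sum
    intro j _
    calc |p i j - p₁ i * p₂ j|
        = |(p i j - q₁ i * q₂ j) + (q₁ i * q₂ j - p₁ i * p₂ j)| := by ring_nf
      _ ≤ _ := abs_add_le _ _
  have hS : S ≤ 2 * γ := by linarith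
  have hTotal : ∑ i, ∑ j, |p i j - p₁ i * p₂ j| ≤ 3 * S := by
    linarith [hTri, hMid, hA, hB]
  have : (1 / 2) * ∑ i, ∑ j, |p i j - p₁ i * p₂ j| ≤ 3 * γ := by linarith
  exact this
end

section
/- Let k be even and let w : {0,1,…,k} → ℝ be any function. For m ∈ {0,1}^k write wt(m) = Σ_{j∈[k]} m_j for its Hamming weight. Then for all distinct indices i₁ ≠ i₂ in [k/2], Σ_{m ∈ {0,1}^k} w(wt(m)) · (m_{2i₁−1} − m_{2i₁}) · (m_{2i₂−1} − m_{2i₂}) = 0. In particular, taking w(t) = q^{k−t}(1−q)^t/(t·e^{2ε} + (k−t)) for any q ∈ (0,1) and ε > 0, the corresponding weighted sum vanishes for every pair i₁ ≠ i₂. -/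
/-!
Swapping the two coordinates `a, b` of one pair is an involution of `{0,1}^k` that preserves the
Hamming weight and the coordinates of every other pair, and flips the sign of `m_a - m_b`. So it
pairs off the terms of the sum with opposite signs; its fixed points have `m_a = m_b` and
contribute nothing.
-/

open Finset Equiv

section SwapCancellation

variable {ι R : Type*} [Fintype ι] [DecidableEq ι] [CommRing R]

theorem sum_mul_indicator_sub_eq_zero_of_swap_invariant {a b : ι} (W : (ι → Bool) → R)
    (hW : ∀ m, W (m ∘ swap a b) = W m) :
    ∑ m : ι → Bool, W m * ((if m a then 1 else 0) - (if m b then 1 else 0)) = 0 := by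
  refine sum_ninvolution (fun m => m ∘ swap a b) (fun m => ?_) (fun m hm hfix => hm ?_)
    (fun _ => mem_univ _) (fun m => by ext; simp)
  · simp only [Function.comp_apply, swap_apply_left, swap_apply_right, hW]
    ring
  · have hab : m a = m b := by simpa using (congrFun hfix a).symm
    simp [hab]

theorem sum_weight_mul_indicator_sub_mul_indicator_sub_eq_zero (w : ℕ → R) {a b c d : ι}
    (hca : c ≠ a) (hcb : c ≠ b) (hda : d ≠ a) (hdb : d ≠ b) :
    ∑ m : ι → Bool, w (∑ j, if m j then 1 else 0) *
        ((if m a then 1 else 0) - (if m b then 1 else 0)) *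
        ((if m c then 1 else 0) - (if m d then 1 else 0)) = 0 := by
  refine (Fintype.sum_congr _ _ fun m => mul_right_comm _ _ _).trans ?_
  refine sum_mul_indicator_sub_eq_zero_of_swap_invariant _ fun m => ?_
  have hweight : ∑ j, (if m (swap a b j) then 1 else 0) = ∑ j, if m j then 1 else 0 :=
    Equiv.sum_comp (swap a b) fun j => if m j then 1 else 0
  simp only [Function.comp_apply, hweight, swap_apply_of_ne_of_ne hca hcb,
    swap_apply_of_ne_of_ne hda hdb]

end SwapCancellation

-- The pairs `(2i−1, 2i)` of `[k]` are `0`-indexed here as `(2i, 2i+1)` for `i < k/2`.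
/-- Combinatorial cancellation over paired coordinates: any weight function of the
Hamming weight alone makes the cross terms over distinct coordinate pairs cancel.
(The pairs of `[k]`, `k` even, are `(2i−1, 2i)`, here `0`-indexed as `(2i, 2i+1)` for
`i < k/2`.)  In particular this holds for the specific weight
`w(t) = q^{k−t}(1−q)^t/(t e^{2ε} + (k−t))` arising in the RAPPOR lower bound. -/
theorem paired_weight_cancellation
    (k : ℕ) (i₁ i₂ : Fin (k / 2)) (hne : i₁ ≠ i₂) :
    (∀ w : ℕ → ℝ,
      ∑ m : Fin k → Bool,
        w (∑ j, if m j then 1 else 0) *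
          ((if m ⟨2 * i₁.val, by have := i₁.isLt; omega⟩ then (1 : ℝ) else 0)
            - (if m ⟨2 * i₁.val + 1, by have := i₁.isLt; omega⟩ then (1 : ℝ) else 0)) *
          ((if m ⟨2 * i₂.val, by have := i₂.isLt; omega⟩ then (1 : ℝ) else 0)
            - (if m ⟨2 * i₂.val + 1, by have := i₂.isLt; omega⟩ then (1 : ℝ) else 0))
        = 0)
    ∧ ∀ q ε : ℝ, 0 < q → q < 1 → 0 < ε →
      ∑ m : Fin k → Bool,
        (q ^ (k - (∑ j, if m j then 1 else 0)) * (1 - q) ^ (∑ j, if m j then 1 else 0)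
            / (((∑ j, if m j then 1 else 0 : ℕ) : ℝ) * Real.exp (2 * ε)
                + ((k - (∑ j, if m j then 1 else 0 : ℕ) : ℕ) : ℝ))) *
          ((if m ⟨2 * i₁.val, by have := i₁.isLt; omega⟩ then (1 : ℝ) else 0)
            - (if m ⟨2 * i₁.val + 1, by have := i₁.isLt; omega⟩ then (1 : ℝ) else 0)) *
          ((if m ⟨2 * i₂.val, by have := i₂.isLt; omega⟩ then (1 : ℝ) else 0)
            - (if m ⟨2 * i₂.val + 1, by have := i₂.isLt; omega⟩ then (1 : ℝ) else 0))
        = 0 := by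
  have hv : i₁.val ≠ i₂.val := Fin.val_ne_of_ne hne
  have cancel (w : ℕ → ℝ) := sum_weight_mul_indicator_sub_mul_indicator_sub_eq_zero w (ι := Fin k)
    (a := ⟨2 * i₁.val, by omega⟩) (b := ⟨2 * i₁.val + 1, by omega⟩)
    (c := ⟨2 * i₂.val, by omega⟩) (d := ⟨2 * i₂.val + 1, by omega⟩)
    (Fin.ne_of_val_ne (by simp only; omega)) (Fin.ne_of_val_ne (by simp only; omega))
    (Fin.ne_of_val_ne (by simp only; omega)) (Fin.ne_of_val_ne (by simp only; omega))
  exact ⟨cancel, fun q ε _ _ _ => cancel fun t =>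
    q ^ (k - t) * (1 - q) ^ t / ((t : ℝ) * Real.exp (2 * ε) + ((k - t : ℕ) : ℝ))⟩
end
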